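/- arXiv:2311.12267 — 10 statements merged into one kernel-verified Lean document; each statement's English description precedes it below -/
import Mathlib

section
/- Linear characterization of the effect-domination equivalence (Lemma 4.1 / lem:mixture). Let G, Ĝ be DAGs on [d] and let H, Ĥ ∈ ℝ^{d×n} (n ≥ d) have full row rank, with rows h_i, ĥ_i. Then the following are equivalent: (a) there exist a permutation π of [d] and a C¹-diffeomorphism ψ : ℝ^d → ℝ^d such that (1) for all i, j ∈ [d], i ∈ pa_G(j) ⟺ π(i) ∈ pa_Ĝ(π(j)); (2) for every i ∈ [d], the component ψ_i(z) depends only on the coordinates z_j with j ∈ \bar{dom}_G(i) (i.e. ψ_i(z) = ψ_i(z′) whenever z_j = z′_j for all j ∈ \bar{dom}_G(i)); and (3) for every x ∈ ℝ^n and every i ∈ [d], ⟨ĥ_{π(i)}, x⟩ = ψ_i(Hx); (b) there exists a permutation π of [d] such that for all i, j ∈ [d], i ∈ pa_G(j) ⟺ π(i) ∈ pa_Ĝ(π(j)), and for every i ∈ [d], ĥ_{π(i)} lies in the linear span of {h_j : j ∈ \bar{dom}_G(i)}. -/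
/-!
Because `H` has full row rank, `x ↦ H x` is onto `ℝ^d`, so condition (3) forces `ψ` to be linear:
`ψ z = C z` for a matrix `C` with `ĥ_{π(i)} = ∑ⱼ C i j • h_j`, and `ψ_i` depends only on
`\bar{dom}_G(i)` exactly when row `i` of `C` is supported there. Conversely, the coefficients
witnessing the span conditions form such a `C`; as `C H` is `Ĥ` with permuted rows and `Ĥ` has full
row rank, `C` is invertible and `z ↦ C z` is the required diffeomorphism.
-/

open Matrix MeasureTheory

/-- `E i j` means there is a directed edge `i → j`. A DAG has no directed cycles. -/
def IsDAG {d : ℕ} (E : Fin d → Fin d → Prop) : Prop :=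
  ∀ i, ¬ Relation.TransGen E i i

/-- The set of parents of `i`. -/
def pa {d : ℕ} (E : Fin d → Fin d → Prop) (i : Fin d) : Set (Fin d) := {j | E j i}

/-- The set of children of `i`. -/
def ch {d : ℕ} (E : Fin d → Fin d → Prop) (i : Fin d) : Set (Fin d) := {j | E i j}

/-- `pa_G(i) ∪ {i}`. -/
def barPa {d : ℕ} (E : Fin d → Fin d → Prop) (i : Fin d) : Set (Fin d) := insert i (pa E i)

/-- `ch_G(i) ∪ {i}`. -/
def barCh {d : ℕ} (E : Fin d → Fin d → Prop) (i : Fin d) : Set (Fin d) := insert i (ch E i)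

/-- The effect-domination set `dom_G(i) = {j ∈ pa_G(i) : ch_G(i) ⊆ ch_G(j)}`. -/
def domSet {d : ℕ} (E : Fin d → Fin d → Prop) (i : Fin d) : Set (Fin d) :=
  {j | j ∈ pa E i ∧ ch E i ⊆ ch E j}

/-- `dom_G(i) ∪ {i}`. -/
def barDom {d : ℕ} (E : Fin d → Fin d → Prop) (i : Fin d) : Set (Fin d) :=
  insert i (domSet E i)

/-- Ancestors of `i`: nodes with a directed path to `i`. -/
def ans {d : ℕ} (E : Fin d → Fin d → Prop) (i : Fin d) : Set (Fin d) :=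
  {j | Relation.TransGen E j i}

/-- A set is ancestral if it is closed under taking ancestors. -/
def Ancestral {d : ℕ} (E : Fin d → Fin d → Prop) (S : Set (Fin d)) : Prop :=
  ∀ j ∈ S, ans E j ⊆ S

/-- The support of `B` matches the graph: `B i j ≠ 0 ↔ j ∈ \bar{pa}_G(i)`. -/
def SupportMatches {d : ℕ} (E : Fin d → Fin d → Prop) (B : Matrix (Fin d) (Fin d) ℝ) : Prop :=
  ∀ i j, B i j ≠ 0 ↔ j ∈ barPa E i

/-- Node-level non-degeneracy: for every node `i`, the span of the `i`-th rows
`(B_k)_i` has dimension `|pa_G(i)| + 1`. -/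
def NodeNonDegenerate {d K : ℕ} (E : Fin d → Fin d → Prop)
    (B : Fin K → Matrix (Fin d) (Fin d) ℝ) : Prop :=
  ∀ i, Module.finrank ℝ (Submodule.span ℝ (Set.range fun k => B k i)) = (pa E i).ncard + 1

/-- A function `f : ℝ^d → ℝ` depends only on the coordinates in `S`. -/
def DependsOnlyOn {d : ℕ} (S : Set (Fin d)) (f : (Fin d → ℝ) → ℝ) : Prop :=
  ∀ z z' : Fin d → ℝ, (∀ j ∈ S, z j = z' j) → f z = f z'

/-- `ψ` is a C¹-diffeomorphism of `ℝ^d`. -/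
def IsC1Diffeo {d : ℕ} (ψ : (Fin d → ℝ) → (Fin d → ℝ)) : Prop :=
  ContDiff ℝ 1 ψ ∧
    ∃ φ : (Fin d → ℝ) → (Fin d → ℝ),
      ContDiff ℝ 1 φ ∧ Function.LeftInverse φ ψ ∧ Function.RightInverse φ ψ


namespace Matrix

variable {m n : Type*} [Fintype m]

theorem mulVec_surjective_of_rank_eq_card {K : Type*} [Field K] [Fintype n] (H : Matrix m n K)
    (hH : H.rank = Fintype.card m) : Function.Surjective H.mulVec := by
  have : LinearMap.range H.mulVecLin = ⊤ :=
    Submodule.eq_top_of_finrank_eq (by rw [← rank, hH, Module.finrank_fintype_fun_eq_card])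
  exact LinearMap.range_eq_top.mp this

theorem mem_span_image_rows_iff {R : Type*} [CommSemiring R] (H : Matrix m n R) (S : Set m)
    (v : n → R) :
    v ∈ Submodule.span R ((fun j => H j) '' S) ↔ ∃ c : m → R, (∀ j ∉ S, c j = 0) ∧ c ᵥ* H = v := by
  constructor
  · intro hv
    obtain ⟨l, hl, rfl⟩ := (Finsupp.mem_span_image_iff_linearCombination R).mp hv
    refine ⟨l, fun j hj => Finsupp.notMem_support_iff.mp fun h => hj (hl h), ?_⟩
    rw [vecMul_eq_sum, Finsupp.linearCombination_apply, Finsupp.sum_fintype _ _ (by simp)]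
  · rintro ⟨c, hc, rfl⟩
    rw [vecMul_eq_sum]
    refine Submodule.sum_mem _ fun j _ => ?_
    by_cases hj : j ∈ S
    · exact Submodule.smul_mem _ _ (Submodule.subset_span ⟨j, hj, rfl⟩)
    · simp [hc j hj]

end Matrix

theorem dependsOnlyOn_dotProduct_iff {d : ℕ} (S : Set (Fin d)) (c : Fin d → ℝ) :
    DependsOnlyOn S (c ⬝ᵥ ·) ↔ ∀ j ∉ S, c j = 0 := by
  constructor
  · intro hc j hj
    have hsingle : ∀ k ∈ S, (Pi.single j 1 : Fin d → ℝ) k = 0 := fun k hk =>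
      Pi.single_eq_of_ne (ne_of_mem_of_not_mem hk hj) 1
    simpa using hc _ _ hsingle
  · intro hc z z' hzz'
    refine Finset.sum_congr rfl fun j _ => ?_
    by_cases hj : j ∈ S
    · rw [hzz' j hj]
    · simp [hc j hj]

theorem isC1Diffeo_mulVec {d : ℕ} {C : Matrix (Fin d) (Fin d) ℝ} (hC : IsUnit C) :
    IsC1Diffeo C.mulVec := by
  have hcontDiff : ∀ A : Matrix (Fin d) (Fin d) ℝ, ContDiff ℝ 1 A.mulVec := fun A =>
    A.mulVecLin.toContinuousLinearMap.contDiff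
  refine ⟨hcontDiff C, C⁻¹.mulVec, hcontDiff _, fun z => ?_, fun z => ?_⟩
  · rw [mulVec_mulVec, nonsing_inv_mul _ ((isUnit_iff_isUnit_det C).mp hC), one_mulVec]
  · rw [mulVec_mulVec, mul_nonsing_inv _ ((isUnit_iff_isUnit_det C).mp hC), one_mulVec]

theorem mem_span_image_rows_of_dotProduct_eq_comp {d n : ℕ} {H : Matrix (Fin d) (Fin n) ℝ}
    (hH : Function.Surjective H.mulVec) {S : Set (Fin d)} {f : (Fin d → ℝ) → ℝ}
    (hf : DependsOnlyOn S f) {v : Fin n → ℝ} (hv : ∀ x, v ⬝ᵥ x = f (H *ᵥ x)) :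
    v ∈ Submodule.span ℝ ((fun j => H j) '' S) := by
  obtain ⟨G, hG⟩ := mulVec_surjective_iff_exists_right_inverse.mp hH
  have hf_eq : f = (v ᵥ* G ⬝ᵥ ·) := funext fun z => by
    rw [← dotProduct_mulVec, hv, mulVec_mulVec, hG, one_mulVec]
  refine (mem_span_image_rows_iff H S v).mpr ⟨v ᵥ* G, ?_, dotProduct_eq _ _ fun x => ?_⟩
  · exact (dependsOnlyOn_dotProduct_iff S _).mp (hf_eq ▸ hf)
  · rw [← dotProduct_mulVec, hv, hf_eq]

theorem dom_equivalence_linear_characterization_general {d n : ℕ}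
    (E Ehat : Fin d → Fin d → Prop)
    (H Hhat : Matrix (Fin d) (Fin n) ℝ) (hH : H.rank = d) (hHhat : Hhat.rank = d) :
    (∃ π : Equiv.Perm (Fin d), ∃ ψ : (Fin d → ℝ) → (Fin d → ℝ),
        IsC1Diffeo ψ ∧
        (∀ i j, i ∈ pa E j ↔ π i ∈ pa Ehat (π j)) ∧
        (∀ i, DependsOnlyOn (barDom E i) (fun z => ψ z i)) ∧
        (∀ x : Fin n → ℝ, ∀ i, Hhat (π i) ⬝ᵥ x = ψ (H.mulVec x) i))
      ↔
    (∃ π : Equiv.Perm (Fin d),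
        (∀ i j, i ∈ pa E j ↔ π i ∈ pa Ehat (π j)) ∧
        ∀ i, Hhat (π i) ∈ Submodule.span ℝ ((fun j => H j) '' barDom E i)) := by
  have hH_surj := H.mulVec_surjective_of_rank_eq_card (by rw [hH, Fintype.card_fin])
  have hHhat_surj := Hhat.mulVec_surjective_of_rank_eq_card (by rw [hHhat, Fintype.card_fin])
  constructor
  · rintro ⟨π, ψ, -, hgraph, hdep, hψ⟩
    exact ⟨π, hgraph, fun i =>
      mem_span_image_rows_of_dotProduct_eq_comp hH_surj (hdep i) fun x => hψ x i⟩
  · rintro ⟨π, hgraph, hspan⟩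
    choose C hC_supp hC_rows using fun i => (mem_span_image_rows_iff H _ _).mp (hspan i)
    have hfactor : ∀ x i, Hhat (π i) ⬝ᵥ x = (of C *ᵥ (H *ᵥ x)) i := fun x i => by
      rw [← hC_rows i, ← dotProduct_mulVec]
      rfl
    have hC_surj : Function.Surjective (of C).mulVec := fun y => by
      obtain ⟨x, hx⟩ := hHhat_surj (y ∘ π.symm)
      refine ⟨H *ᵥ x, funext fun i => ?_⟩
      rw [← hfactor]
      exact (congrFun hx (π i)).trans (by simp)
    exact ⟨π, (of C).mulVec, isC1Diffeo_mulVec (mulVec_surjective_iff_isUnit.mp hC_surj), hgraph,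
      fun i => (dependsOnlyOn_dotProduct_iff _ _).mpr (hC_supp i), hfactor⟩

/-- Linear characterization of the effect-domination equivalence (Lemma 4.1). -/
theorem dom_equivalence_linear_characterization {d n : ℕ} (hn : d ≤ n)
    (E Ehat : Fin d → Fin d → Prop) (hG : IsDAG E) (hGhat : IsDAG Ehat)
    (H Hhat : Matrix (Fin d) (Fin n) ℝ) (hH : H.rank = d) (hHhat : Hhat.rank = d) :
    (∃ π : Equiv.Perm (Fin d), ∃ ψ : (Fin d → ℝ) → (Fin d → ℝ),
        IsC1Diffeo ψ ∧
        (∀ i j, i ∈ pa E j ↔ π i ∈ pa Ehat (π j)) ∧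
        (∀ i, DependsOnlyOn (barDom E i) (fun z => ψ z i)) ∧
        (∀ x : Fin n → ℝ, ∀ i, Hhat (π i) ⬝ᵥ x = ψ (H.mulVec x) i))
      ↔
    (∃ π : Equiv.Perm (Fin d),
        (∀ i j, i ∈ pa E j ↔ π i ∈ pa Ehat (π j)) ∧
        ∀ i, Hhat (π i) ∈ Submodule.span ℝ ((fun j => H j) '' barDom E i)) :=
  dom_equivalence_linear_characterization_general E Ehat H Hhat hH hHhat
end

section
/- Graph identifiability for linear models (lemma inside the proof of Theorem 4.1). Let G, Ĝ be DAGs on [d], let K ≥ 1, let T ∈ ℝ^{d×d}, and let {B_k}_{k∈[K]} and {B̂_k}_{k∈[K]} be families of d×d real matrices such that: (1) B̂_k = B_k T for every k ∈ [K]; (2) (B_k)_{ij} ≠ 0 ⟺ j ∈ \bar{pa}_G(i) and (B̂_k)_{ij} ≠ 0 ⟺ j ∈ \bar{pa}_Ĝ(i) for all i, j, k; (3) {B_k} is node-level non-degenerate with respect to G and {B̂_k} is node-level non-degenerate with respect to Ĝ. Then G = Ĝ, i.e. pa_G(i) = pa_Ĝ(i) for every i ∈ [d]. -/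
open Matrix MeasureTheory

section GraphIdentAux

variable {d : ℕ}

/-- Coordinate subspace of `ℝ^d` supported on `S`. -/
noncomputable def coordSub (S : Set (Fin d)) : Submodule ℝ (Fin d → ℝ) :=
  Submodule.span ℝ ((fun j => Pi.single j (1:ℝ)) '' S)

lemma mem_coordSub_iff {S : Set (Fin d)} {v : Fin d → ℝ} :
    v ∈ coordSub S ↔ ∀ j ∉ S, v j = 0 := by
  classical
  constructor
  · intro hv j hj
    induction hv using Submodule.span_induction with
    | mem x hx =>
      obtain ⟨l, hl, rfl⟩ := hx
      exact Pi.single_eq_of_ne (fun h : j = l => hj (h ▸ hl)) 1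
    | zero => rfl
    | add x y _ _ hx hy => simp [hx, hy]
    | smul c x _ hx => simp [hx]
  · intro hv
    have hsum : v = ∑ j : Fin d, Pi.single j (v j) := (Finset.univ_sum_single v).symm
    rw [hsum]
    refine Submodule.sum_mem _ (fun j _ => ?_)
    by_cases hj : j ∈ S
    · have : Pi.single j (v j) = (v j) • (Pi.single j (1:ℝ) : Fin d → ℝ) := by
        ext l; by_cases h : l = j <;> simp [h, Pi.single_apply]
      rw [this]
      exact Submodule.smul_mem _ _ (Submodule.subset_span ⟨j, hj, rfl⟩)
    · rw [hv j hj]; simp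

lemma finrank_coordSub (S : Set (Fin d)) :
    Module.finrank ℝ (coordSub S) = S.ncard := by
  classical
  haveI : Fintype S := (S.toFinite).fintype
  have hb : LinearIndependent ℝ (fun j : S => (Pi.single (j : Fin d) (1:ℝ) : Fin d → ℝ)) := by
    have h := (Pi.basisFun ℝ (Fin d)).linearIndependent
    have h2 := h.comp (fun j : S => (j : Fin d)) Subtype.coe_injective
    convert h2 using 1
    funext j
    simp [Function.comp, Pi.basisFun_apply]
  have : coordSub S = Submodule.span ℝ
      (Set.range fun j : S => (Pi.single (j : Fin d) (1:ℝ) : Fin d → ℝ)) := by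
    unfold coordSub
    rw [Set.image_eq_range]
  rw [this, finrank_span_eq_card hb, ← Nat.card_coe_set_eq, Nat.card_eq_fintype_card]

lemma coordSub_inter (S S' : Set (Fin d)) :
    coordSub (S ∩ S') = coordSub S ⊓ coordSub S' := by
  ext v
  simp only [Submodule.mem_inf, mem_coordSub_iff]
  constructor
  · intro h
    exact ⟨fun j hj => h j (fun hm => hj hm.1), fun j hj => h j (fun hm => hj hm.2)⟩
  · rintro ⟨h1, h2⟩ j hj
    rcases (not_and_or.mp (by simpa [Set.mem_inter_iff] using hj)) with h | h
    · exact h1 j h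
    · exact h2 j h

lemma coordSub_iUnion {ι : Sort*} (S : ι → Set (Fin d)) :
    coordSub (⋃ i, S i) = ⨆ i, coordSub (S i) := by
  unfold coordSub
  rw [Set.image_iUnion, Submodule.span_iUnion]

lemma coordSub_univ : coordSub (Set.univ : Set (Fin d)) = ⊤ := by
  rw [eq_top_iff]
  intro v _
  rw [mem_coordSub_iff]
  intro j hj
  exact absurd (Set.mem_univ j) hj

lemma ncard_inter_insert_mem {S : Set (Fin d)} {j : Fin d} {A : Set (Fin d)}
    (hj : j ∉ A) (hjS : j ∈ S) :
    (S ∩ insert j A).ncard = (S ∩ A).ncard + 1 := by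
  have he : S ∩ insert j A = insert j (S ∩ A) := by
    ext l
    simp only [Set.mem_inter_iff, Set.mem_insert_iff]
    constructor
    · rintro ⟨hlS, rfl | hlA⟩
      · exact Or.inl rfl
      · exact Or.inr ⟨hlS, hlA⟩
    · rintro (rfl | ⟨hlS, hlA⟩)
      · exact ⟨hjS, Or.inl rfl⟩
      · exact ⟨hlS, Or.inr hlA⟩
  rw [he, Set.ncard_insert_of_notMem (fun h => hj h.2) (Set.toFinite _)]

lemma ncard_inter_insert_notMem {S : Set (Fin d)} {j : Fin d} {A : Set (Fin d)}
    (hjS : j ∉ S) :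
    (S ∩ insert j A).ncard = (S ∩ A).ncard := by
  have he : S ∩ insert j A = S ∩ A := by
    ext l
    simp only [Set.mem_inter_iff, Set.mem_insert_iff]
    constructor
    · rintro ⟨hlS, rfl | hlA⟩
      · exact absurd hlS hjS
      · exact ⟨hlS, hlA⟩
    · rintro ⟨hlS, hlA⟩
      exact ⟨hlS, Or.inr hlA⟩
  rw [he]

end GraphIdentAux

/-- Graph identifiability for linear models (lemma inside the proof of Theorem 4.1):
if `B̂_k = B_k T` with matching supports and node-level non-degeneracy on both sides,
then the two graphs are equal. -/
theorem graph_identifiability {d K : ℕ} (hK : 1 ≤ K)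
    (E Ehat : Fin d → Fin d → Prop) (hG : IsDAG E) (hGhat : IsDAG Ehat)
    (T : Matrix (Fin d) (Fin d) ℝ)
    (B Bhat : Fin K → Matrix (Fin d) (Fin d) ℝ)
    (hBT : ∀ k, Bhat k = B k * T)
    (hsupp : ∀ k, SupportMatches E (B k))
    (hsupphat : ∀ k, SupportMatches Ehat (Bhat k))
    (hnd : NodeNonDegenerate E B)
    (hndhat : NodeNonDegenerate Ehat Bhat) :
    ∀ i, pa E i = pa Ehat i := by
  classical
  set f : (Fin d → ℝ) →ₗ[ℝ] (Fin d → ℝ) := T.vecMulLinear with hfdef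
  -- no self-loops
  have hself : ∀ i, i ∉ pa E i := fun i h => hG i (Relation.TransGen.single h)
  have hselfhat : ∀ i, i ∉ pa Ehat i := fun i h => hGhat i (Relation.TransGen.single h)
  have hncard : ∀ i, (barPa E i).ncard = (pa E i).ncard + 1 :=
    fun i => Set.ncard_insert_of_notMem (hself i) (Set.toFinite _)
  have hncardhat : ∀ i, (barPa Ehat i).ncard = (pa Ehat i).ncard + 1 :=
    fun i => Set.ncard_insert_of_notMem (hselfhat i) (Set.toFinite _)
  -- rows of Bhat are images of rows of B
  have hrow : ∀ k i, Bhat k i = f (B k i) := by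
    intro k i
    funext j
    rw [hBT]
    simp [hfdef, Matrix.vecMulLinear_apply, Matrix.mul_apply, Matrix.vecMul, dotProduct]
  -- the rows span the corresponding coordinate subspaces
  have hspan : ∀ i, Submodule.span ℝ (Set.range fun k => B k i) = coordSub (barPa E i) := by
    intro i
    refine Submodule.eq_of_le_of_finrank_le ?_ ?_
    · rw [Submodule.span_le]
      rintro _ ⟨k, rfl⟩
      rw [SetLike.mem_coe, mem_coordSub_iff]
      intro j hj
      by_contra h0
      exact hj (((hsupp k) i j).mp h0)
    · rw [finrank_coordSub, hncard i, hnd i]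
  have hspanhat : ∀ i,
      Submodule.span ℝ (Set.range fun k => Bhat k i) = coordSub (barPa Ehat i) := by
    intro i
    refine Submodule.eq_of_le_of_finrank_le ?_ ?_
    · rw [Submodule.span_le]
      rintro _ ⟨k, rfl⟩
      rw [SetLike.mem_coe, mem_coordSub_iff]
      intro j hj
      by_contra h0
      exact hj (((hsupphat k) i j).mp h0)
    · rw [finrank_coordSub, hncardhat i, hndhat i]
  -- f maps coordSub (barPa E i) onto coordSub (barPa Ehat i)
  have hmap : ∀ i, (coordSub (barPa E i)).map f = coordSub (barPa Ehat i) := by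
    intro i
    have himg : (⇑f '' Set.range fun k => B k i) = Set.range fun k => Bhat k i := by
      ext v
      simp only [Set.mem_image, Set.mem_range]
      constructor
      · rintro ⟨_, ⟨k, rfl⟩, rfl⟩
        exact ⟨k, hrow k i⟩
      · rintro ⟨k, rfl⟩
        exact ⟨B k i, ⟨k, rfl⟩, (hrow k i).symm⟩
    rw [← hspan, Submodule.map_span, himg, hspanhat]
  -- f is bijective
  have huniv : (⋃ i, barPa E i) = (Set.univ : Set (Fin d)) :=
    Set.eq_univ_of_forall (fun j => Set.mem_iUnion.mpr ⟨j, Set.mem_insert j _⟩)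
  have hunivhat : (⋃ i, barPa Ehat i) = (Set.univ : Set (Fin d)) :=
    Set.eq_univ_of_forall (fun j => Set.mem_iUnion.mpr ⟨j, Set.mem_insert j _⟩)
  have hsurj : Function.Surjective f := by
    rw [← LinearMap.range_eq_top, ← Submodule.map_top f]
    have h1 : (⊤ : Submodule ℝ (Fin d → ℝ)) = ⨆ i, coordSub (barPa E i) := by
      rw [← coordSub_iUnion, huniv, coordSub_univ]
    conv_lhs => rw [h1]
    rw [Submodule.map_iSup]
    simp_rw [hmap]
    rw [← coordSub_iUnion, hunivhat, coordSub_univ]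
  have hinj : Function.Injective f := LinearMap.injective_iff_surjective.mpr hsurj
  have hfr : ∀ p : Submodule ℝ (Fin d → ℝ),
      Module.finrank ℝ (p.map f) = Module.finrank ℝ p :=
    fun p => (LinearEquiv.finrank_eq (Submodule.equivMapOfInjective f hinj p)).symm
  -- f fixes coordinate subspaces of E-ancestral sets
  have hancmap : ∀ A : Set (Fin d), Ancestral E A → (coordSub A).map f = coordSub A := by
    intro A hA
    have hAU : A = ⋃ j : A, barPa E (j : Fin d) := by
      apply subset_antisymm
      · intro j hj
        exact Set.mem_iUnion.mpr ⟨⟨j, hj⟩, Set.mem_insert j _⟩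
      · intro l hl
        rw [Set.mem_iUnion] at hl
        obtain ⟨⟨j, hj⟩, hl⟩ := hl
        simp only [barPa, Set.mem_insert_iff] at hl
        rcases hl with rfl | hl
        · exact hj
        · exact hA j hj (Relation.TransGen.single hl)
    have hmapA : (coordSub A).map f = coordSub (⋃ j : A, barPa Ehat (j : Fin d)) := by
      conv_lhs => rw [hAU]
      rw [coordSub_iUnion, Submodule.map_iSup]
      simp_rw [hmap]
      rw [← coordSub_iUnion]
    have hsub : A ⊆ ⋃ j : A, barPa Ehat (j : Fin d) :=
      fun j hj => Set.mem_iUnion.mpr ⟨⟨j, hj⟩, Set.mem_insert j _⟩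
    have hle : (⋃ j : A, barPa Ehat (j : Fin d)).ncard ≤ A.ncard := by
      have h1 : Module.finrank ℝ ((coordSub A).map f) = A.ncard := by
        rw [hfr, finrank_coordSub]
      rw [hmapA, finrank_coordSub] at h1
      exact h1.le
    have hAeq : A = ⋃ j : A, barPa Ehat (j : Fin d) :=
      Set.eq_of_subset_of_ncard_le hsub hle (Set.toFinite _)
    rw [hmapA, ← hAeq]
  -- cardinality identity
  have hcard : ∀ (i : Fin d) (A : Set (Fin d)), Ancestral E A →
      (barPa E i ∩ A).ncard = (barPa Ehat i ∩ A).ncard := by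
    intro i A hA
    have hm : (coordSub (barPa E i ∩ A)).map f = coordSub (barPa Ehat i ∩ A) := by
      rw [coordSub_inter, Submodule.map_inf f hinj, hmap i, hancmap A hA, ← coordSub_inter]
    calc (barPa E i ∩ A).ncard
        = Module.finrank ℝ (coordSub (barPa E i ∩ A)) := (finrank_coordSub _).symm
      _ = Module.finrank ℝ ((coordSub (barPa E i ∩ A)).map f) := (hfr _).symm
      _ = (barPa Ehat i ∩ A).ncard := by rw [hm, finrank_coordSub]
  -- ancestral sets
  have hans : ∀ j : Fin d, Ancestral E (ans E j) := by
    intro j l hl m hm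
    exact Relation.TransGen.trans hm hl
  have hansi : ∀ j : Fin d, Ancestral E (insert j (ans E j)) := by
    intro j l hl m hm
    rcases hl with rfl | hl
    · exact Set.mem_insert_of_mem _ hm
    · exact Set.mem_insert_of_mem _ (Relation.TransGen.trans hm hl)
  -- conclude barPa equality
  have hbar : ∀ i, barPa E i = barPa Ehat i := by
    intro i
    ext j
    have hjn : j ∉ ans E j := hG j
    have h1 := hcard i (insert j (ans E j)) (hansi j)
    have h2 := hcard i (ans E j) (hans j)
    by_cases hjS : j ∈ barPa E i <;> by_cases hjT : j ∈ barPa Ehat i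
    · simp [hjS, hjT]
    · exfalso
      rw [ncard_inter_insert_mem hjn hjS, ncard_inter_insert_notMem hjT, h2] at h1
      omega
    · exfalso
      rw [ncard_inter_insert_notMem hjS, ncard_inter_insert_mem hjn hjT, h2] at h1
      omega
    · simp [hjS, hjT]
  intro i
  have h := hbar i
  have : (barPa E i) \ {i} = (barPa Ehat i) \ {i} := by rw [h]
  rwa [barPa, barPa, Set.insert_diff_self_of_notMem (hself i),
    Set.insert_diff_self_of_notMem (hselfhat i)] at this
end

section
/- Support of the latent mixing matrix (final step in the proof of Theorem 4.1). Let G be a DAG on [d], let K ≥ 1, let T ∈ ℝ^{d×d}, and let {B_k}_{k∈[K]} and {B̂_k}_{k∈[K]} be families of d×d real matrices such that: (1) B̂_k = B_k T for every k; (2) both families have support matching G, i.e. (B_k)_{ij} ≠ 0 ⟺ j ∈ \bar{pa}_G(i) and (B̂_k)_{ij} ≠ 0 ⟺ j ∈ \bar{pa}_G(i); (3) {B_k}_{k∈[K]} is node-level non-degenerate with respect to G. Then T_{ℓ i} ≠ 0 implies \bar{ch}_G(ℓ) ⊆ \bar{ch}_G(i); in particular, T_{ℓ i} ≠ 0 implies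 i ∈ \bar{dom}_G(ℓ). -/
open Matrix MeasureTheory

/-- Support of the latent mixing matrix (final step in the proof of Theorem 4.1):
`T_{ℓi} ≠ 0` implies `\bar{ch}_G(ℓ) ⊆ \bar{ch}_G(i)`, in particular `i ∈ \bar{dom}_G(ℓ)`. -/
theorem mixing_matrix_support {d K : ℕ} (hK : 1 ≤ K)
    (E : Fin d → Fin d → Prop) (hG : IsDAG E)
    (T : Matrix (Fin d) (Fin d) ℝ)
    (B Bhat : Fin K → Matrix (Fin d) (Fin d) ℝ)
    (hBT : ∀ k, Bhat k = B k * T)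
    (hsupp : ∀ k, SupportMatches E (B k))
    (hsupphat : ∀ k, SupportMatches E (Bhat k))
    (hnd : NodeNonDegenerate E B) :
    ∀ ℓ i, T ℓ i ≠ 0 → barCh E ℓ ⊆ barCh E i ∧ i ∈ barDom E ℓ := by
  classical
  have hnoself : ∀ j, ¬ E j j := fun j h => hG j (Relation.TransGen.single h)
  have main : ∀ ℓ i, T ℓ i ≠ 0 → barCh E ℓ ⊆ barCh E i := by
    intro ℓ i hT j hj
    by_contra hji
    -- ℓ ∈ barPa E j, i ∉ barPa E j
    have hℓ : ℓ ∈ barPa E j := by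
      rcases hj with h | h
      · exact Or.inl h.symm
      · exact Or.inr h
    have hi : i ∉ barPa E j := by
      intro h
      rcases h with h | h
      · exact hji (Or.inl h.symm)
      · exact hji (Or.inr h)
    -- the key linear relation
    have h0 : ∀ k, ∑ m, B k j m * T m i = 0 := by
      intro k
      have hz : Bhat k j i = 0 := by
        by_contra hne
        exact hi ((hsupphat k j i).1 hne)
      rw [hBT] at hz
      simpa [Matrix.mul_apply] using hz
    set S : Set (Fin d) := barPa E j with hS
    have hjS : j ∉ pa E j := hnoself j
    have hScard : S.ncard = (pa E j).ncard + 1 := by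
      rw [hS, barPa, Set.ncard_insert_of_notMem hjS (Set.toFinite _)]
    haveI : Fintype S := (Set.toFinite S).fintype
    set f : Fin d → (Fin d → ℝ) := fun m => Pi.single m (1 : ℝ) with hf
    have hli : LinearIndependent ℝ (fun m : S => f (m : Fin d)) := by
      have hb : LinearIndependent ℝ f := by
        have hfb : (⇑(Pi.basisFun ℝ (Fin d)) : Fin d → Fin d → ℝ) = f :=
          funext fun m => Pi.basisFun_apply ℝ (Fin d) m
        exact hfb ▸ (Pi.basisFun ℝ (Fin d)).linearIndependent
      exact hb.comp _ Subtype.val_injective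
    set W : Submodule ℝ (Fin d → ℝ) := Submodule.span ℝ (f '' S) with hW
    have hWrank : Module.finrank ℝ W = (pa E j).ncard + 1 := by
      have himg : f '' S = Set.range (fun m : S => f (m : Fin d)) := by
        rw [← Set.image_eq_range]
      rw [hW, himg, finrank_span_eq_card hli]
      rw [← hScard, Set.ncard_eq_toFinset_card']
      simp [Set.toFinset_card]
    have hsub : Submodule.span ℝ (Set.range fun k => B k j) ≤ W := by
      rw [Submodule.span_le]
      rintro _ ⟨k, rfl⟩
      show B k j ∈ W
      have hrow : B k j = ∑ m ∈ (Set.toFinite S).toFinset, B k j m • f m := by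
        funext n
        simp only [Finset.sum_apply, Pi.smul_apply, hf, smul_eq_mul]
        by_cases hn : n ∈ S
        · rw [Finset.sum_eq_single n]
          · simp
          · intro b _ hbn; simp [Pi.single_apply, hbn]
          · intro h; exact absurd ((Set.Finite.mem_toFinset _).2 hn) h
        · have : B k j n = 0 := by
            by_contra hne
            exact hn ((hsupp k j n).1 hne)
          rw [this]
          refine (Finset.sum_eq_zero ?_).symm
          intro b hb
          have hbS : (b : Fin d) ∈ S := (Set.Finite.mem_toFinset _).1 hb
          have hbn : b ≠ n := fun h => hn (h ▸ hbS)
          simp [Pi.single_apply, hbn]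
      rw [hrow]
      exact Submodule.sum_mem _ fun m hm =>
        Submodule.smul_mem _ _ (Submodule.subset_span ⟨m, (Set.Finite.mem_toFinset _).1 hm, rfl⟩)
    have heq : Submodule.span ℝ (Set.range fun k => B k j) = W :=
      Submodule.eq_of_le_of_finrank_le hsub (by rw [hWrank, hnd j])
    -- the functional v ↦ ∑ m, v m * T m i
    let φ : (Fin d → ℝ) →ₗ[ℝ] ℝ :=
      { toFun := fun v => ∑ m, v m * T m i
        map_add' := by intro x y; simp [add_mul, Finset.sum_add_distrib]
        map_smul' := by intro c x; simp [mul_assoc, Finset.mul_sum]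
      }
    have hker : Submodule.span ℝ (Set.range fun k => B k j) ≤ LinearMap.ker φ := by
      rw [Submodule.span_le]
      rintro _ ⟨k, rfl⟩
      exact h0 k
    have hmem : f ℓ ∈ Submodule.span ℝ (Set.range fun k => B k j) := by
      rw [heq, hW]
      exact Submodule.subset_span ⟨ℓ, hℓ, rfl⟩
    have : φ (f ℓ) = 0 := hker hmem
    have : T ℓ i = 0 := by
      simpa [φ, hf, Pi.single_apply] using this
    exact hT this
  intro ℓ i hT
  refine ⟨main ℓ i hT, ?_⟩
  by_cases hℓi : i = ℓ
  · exact Or.inl hℓi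
  · have hℓmem : ℓ ∈ barCh E i := main ℓ i hT (Or.inl rfl)
    have hipa : i ∈ pa E ℓ := by
      rcases hℓmem with h | h
      · exact absurd h.symm hℓi
      · exact h
    refine Or.inr ⟨hipa, ?_⟩
    intro j hj
    have : j ∈ barCh E i := main ℓ i hT (Or.inr hj)
    rcases this with h | h
    · exfalso
      exact hG ℓ (Relation.TransGen.head (h ▸ hj) (Relation.TransGen.single hipa))
    · exact h
end

section
/- Ancestry criterion via projections (Proposition 5.1, first claim). Let G be a DAG on [d], let H ∈ ℝ^{d×n} (n ≥ d) have full row rank with rows h_1,…,h_d, and let {B_k}_{k∈[K]} be a family of d×d real matrices with (B_k)_{ij} ≠ 0 ⟺ j ∈ \bar{pa}_G(i) that is node-level non-degenerate with respect to G. Set M_k = B_k H. Let S ⊆ [d] be an ancestral set and i ∉ S. For each k ∈ [K] let W_k = span{(M_k)_s : s ∈ S} ⊆ ℝ^n and let q_k be the orthogonal projection (with respect to the standard inner product on ℝ^n) of the i-th row (M_k)_i onto the orthogonal complement W_k^⊥. Then dim span{q_k : k ∈ [K]} = 1 if and only if ans_G(i) ⊆ S. -/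
/-
The rows `h_j` of `H` are linearly independent and `(M_k)_s = ∑_j (B_k)_{sj} h_j`. As `S` is
ancestral and each `B_k` is triangular along `G` with nonzero diagonal, `W_k = span{h_s : s ∈ S}`
for every `k`; call it `W` and let `P` be the projection onto `Wᗮ`, whose kernel is `W`. Then
`q_k = ∑_j (B_k)_{ij} P h_j`, and by non-degeneracy the rows `(B_k)_i` span all vectors supported
on `pa̅(i)`, so the `q_k` span `span{P h_j : j ∈ pa̅(i)}`. Since `P h_j = 0` for `j ∈ S` while the
`P h_j` with `j ∉ S` are independent, this span has dimension `|pa̅(i) \ S| = 1 + |pa(i) \ S|`,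
which is `1` iff `pa(i) ⊆ S`, i.e. iff `ans(i) ⊆ S`.
-/

open Matrix MeasureTheory

/-- View a row vector in `ℝ^n` as an element of Euclidean space. -/
noncomputable def toE {n : ℕ} (v : Fin n → ℝ) : EuclideanSpace ℝ (Fin n) :=
  (WithLp.equiv 2 (Fin n → ℝ)).symm v

/-- Orthogonal projection of `v` onto the orthogonal complement `W^⊥`. -/
noncomputable def projPerp {n : ℕ} (W : Submodule ℝ (EuclideanSpace ℝ (Fin n)))
    (v : EuclideanSpace ℝ (Fin n)) : EuclideanSpace ℝ (Fin n) :=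
  (Submodule.orthogonalProjectionOnto Wᗮ v : EuclideanSpace ℝ (Fin n))

namespace IsDAG

variable {d : ℕ} {E : Fin d → Fin d → Prop}

theorem notMem_pa (hG : IsDAG E) (i : Fin d) : i ∉ pa E i :=
  fun h => hG i (.single h)

theorem wellFounded (hG : IsDAG E) : WellFounded E :=
  haveI : IsTrans (Fin d) (Relation.TransGen E) := ⟨fun _ _ _ => .trans⟩
  haveI : Std.Irrefl (Relation.TransGen E) := ⟨hG⟩
  Subrelation.wf (fun h => Relation.TransGen.single h) (Finite.wellFounded_of_trans_of_irrefl _)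

theorem ncard_barPa_diff_eq_one_iff (hG : IsDAG E) {S : Set (Fin d)} {i : Fin d} (hi : i ∉ S) :
    (barPa E i \ S).ncard = 1 ↔ pa E i ⊆ S := by
  rw [barPa, Set.insert_sdiff_of_notMem _ hi,
    Set.ncard_insert_of_notMem fun h => hG.notMem_pa i h.1, add_eq_right,
    Set.ncard_eq_zero, Set.sdiff_eq_empty]

end IsDAG

namespace Ancestral

variable {d : ℕ} {E : Fin d → Fin d → Prop} {S : Set (Fin d)}

theorem barPa_subset (hS : Ancestral E S) {s : Fin d} (hs : s ∈ S) : barPa E s ⊆ S :=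
  Set.insert_subset hs fun _ hj => hS s hs (.single hj)

theorem ans_subset_iff (hS : Ancestral E S) (i : Fin d) : ans E i ⊆ S ↔ pa E i ⊆ S := by
  refine ⟨fun h j hj => h (.single hj), fun h j hj => ?_⟩
  obtain ⟨b, hjb, hbi⟩ := Relation.TransGen.tail'_iff.mp hj
  rcases Relation.reflTransGen_iff_eq_or_transGen.mp hjb with rfl | hjb
  · exact h hbi
  · exact hS b (h hbi) hjb

end Ancestral

section LinearAlgebra

variable {K ι M N : Type*} [Field K] [AddCommGroup M] [Module K M] [AddCommGroup N] [Module K N]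

theorem Pi.map_linearCombination_spanSubset [Fintype ι] (v : ι → M) (T : Set ι) :
    (Pi.spanSubset K T).map (Fintype.linearCombination K v) = Submodule.span K (v '' T) := by
  classical
  rw [Pi.spanSubset, Submodule.map_span, Set.image_image]
  congr! 2 with j
  rw [Pi.basisFun_apply, Fintype.linearCombination_apply_single, one_smul]

theorem Fintype.linearCombination_mem_span_image [Fintype ι] (v : ι → M) {T : Set ι}
    {c : ι → K} (hc : c ∈ Pi.spanSubset K T) :
    Fintype.linearCombination K v c ∈ Submodule.span K (v '' T) :=
  Pi.map_linearCombination_spanSubset (K := K) v T ▸ Submodule.mem_map_of_mem hc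

theorem LinearIndepOn.finrank_span_image [Finite ι] {v : ι → M} {s : Set ι}
    (hs : LinearIndepOn K v s) : Module.finrank K (Submodule.span K (v '' s)) = s.ncard := by
  have := Fintype.ofFinite ι
  classical
  rw [finrank_span_set_eq_card hs.id_image, Set.toFinset_card, ← Nat.card_eq_fintype_card,
    Nat.card_coe_set_eq, hs.injOn.ncard_image]

theorem LinearIndependent.linearIndepOn_comp_compl {v : ι → M} (hv : LinearIndependent K v)
    (f : M →ₗ[K] N) {S : Set ι} (hf : LinearMap.ker f ≤ Submodule.span K (v '' S)) :
    LinearIndepOn K (f ∘ v) Sᶜ := by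
  refine (hv.linearIndepOn Sᶜ).map ?_
  rw [← Set.image_eq_range]
  exact (hv.disjoint_span_image disjoint_compl_left).mono_right hf

theorem LinearIndependent.finrank_span_comp_image [Finite ι] {v : ι → M}
    (hv : LinearIndependent K v) (f : M →ₗ[K] N) {S : Set ι}
    (hf : LinearMap.ker f = Submodule.span K (v '' S)) (T : Set ι) :
    Module.finrank K (Submodule.span K ((f ∘ v) '' T)) = (T \ S).ncard := by
  have hspan : Submodule.span K ((f ∘ v) '' T) = Submodule.span K ((f ∘ v) '' (T \ S)) := by
    refine le_antisymm (Submodule.span_le.mpr ?_) (Submodule.span_mono (Set.image_mono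
      Set.sdiff_subset))
    rintro _ ⟨j, hj, rfl⟩
    by_cases hjS : j ∈ S
    · have : f (v j) = 0 := by
        rw [← LinearMap.mem_ker, hf]
        exact Submodule.subset_span ⟨j, hjS, rfl⟩
      simp [this]
    · exact Submodule.subset_span ⟨j, ⟨hj, hjS⟩, rfl⟩
  rw [hspan,
    ((hv.linearIndepOn_comp_compl f hf.le).mono (Set.sdiff_subset_compl T S)).finrank_span_image]

theorem Matrix.linearIndependent_row_of_rank_eq_card [Fintype ι] {n : Type*} [Fintype n]
    {A : Matrix ι n K} (hA : A.rank = Fintype.card ι) : LinearIndependent K A.row := by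
  rw [linearIndependent_iff_card_eq_finrank_span, Set.finrank, ← A.rank_eq_finrank_span_row, hA]

end LinearAlgebra

namespace SupportMatches

variable {d : ℕ} {E : Fin d → Fin d → Prop} {A : Matrix (Fin d) (Fin d) ℝ}

theorem row_mem_spanSubset (hA : SupportMatches E A) (s : Fin d) :
    A s ∈ Pi.spanSubset ℝ (barPa E s) :=
  Pi.mem_spanSubset_iff.mpr fun j hj => not_not.mp fun h => hj ((hA s j).mp h)

theorem offDiag_row_mem_spanSubset (hA : SupportMatches E A) (s : Fin d) :
    A s - Pi.single s (A s s) ∈ Pi.spanSubset ℝ (pa E s) := by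
  refine Pi.mem_spanSubset_iff.mpr fun j hj => ?_
  rcases eq_or_ne j s with rfl | hjs
  · simp
  · rw [Pi.sub_apply, Pi.single_eq_of_ne hjs, sub_zero]
    exact Pi.mem_spanSubset_iff.mp (hA.row_mem_spanSubset s) j
      (by simp [barPa, hjs, hj])

theorem span_linearCombination_rows_eq {M : Type*} [AddCommGroup M] [Module ℝ M]
    (hG : IsDAG E) (hA : SupportMatches E A) (v : Fin d → M) {S : Set (Fin d)}
    (hS : Ancestral E S) :
    Submodule.span ℝ ((fun s => Fintype.linearCombination ℝ v (A s)) '' S) =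
      Submodule.span ℝ (v '' S) := by
  set R := Submodule.span ℝ ((fun s => Fintype.linearCombination ℝ v (A s)) '' S)
  refine le_antisymm (Submodule.span_le.mpr ?_) (Submodule.span_le.mpr ?_)
  · rintro _ ⟨s, hs, rfl⟩
    exact Submodule.span_mono (Set.image_mono (hS.barPa_subset hs))
      (Fintype.linearCombination_mem_span_image v (hA.row_mem_spanSubset s))
  · rintro _ ⟨t, ht, rfl⟩
    induction t using hG.wellFounded.induction with
    | _ t ih =>
    -- Row `t` is `A t t • v t` plus a combination of the `v j` over parents `j`, and `A t t ≠ 0`.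
    have hrow : Fintype.linearCombination ℝ v (A t) ∈ R := Submodule.subset_span ⟨t, ht, rfl⟩
    have hparents : Fintype.linearCombination ℝ v (A t - Pi.single t (A t t)) ∈ R := by
      refine Submodule.span_le.mpr ?_
        (Fintype.linearCombination_mem_span_image v (hA.offDiag_row_mem_spanSubset t))
      rintro _ ⟨j, hj, rfl⟩
      exact ih j hj (hS t ht (.single hj))
    have hvt : v t = (A t t)⁻¹ • (Fintype.linearCombination ℝ v (A t) -
        Fintype.linearCombination ℝ v (A t - Pi.single t (A t t))) := by
      rw [map_sub, sub_sub_cancel, Fintype.linearCombination_apply_single,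
        inv_smul_smul₀ ((hA t t).mpr (Set.mem_insert t _))]
    rw [hvt]
    exact R.smul_mem _ (R.sub_mem hrow hparents)

end SupportMatches

theorem NodeNonDegenerate.span_rows_eq_spanSubset {d K : ℕ} {E : Fin d → Fin d → Prop}
    {B : Fin K → Matrix (Fin d) (Fin d) ℝ} (hnd : NodeNonDegenerate E B) (hG : IsDAG E)
    (hsupp : ∀ k, SupportMatches E (B k)) (i : Fin d) :
    Submodule.span ℝ (Set.range fun k => B k i) = Pi.spanSubset ℝ (barPa E i) := by
  refine Submodule.eq_of_le_of_finrank_eq (Submodule.span_le.mpr ?_) ?_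
  · rintro _ ⟨k, rfl⟩
    exact (hsupp k).row_mem_spanSubset i
  · rw [hnd i, Pi.dim_spanSubset, barPa, Set.ncard_insert_of_notMem (hG.notMem_pa i)]

theorem toE_mul_row {d n : ℕ} (A : Matrix (Fin d) (Fin d) ℝ) (H : Matrix (Fin d) (Fin n) ℝ)
    (s : Fin d) : toE ((A * H) s) = Fintype.linearCombination ℝ (fun j => toE (H j)) (A s) := by
  ext m
  simp [toE, Fintype.linearCombination_apply, Matrix.mul_apply]

theorem linearIndependent_toE_row {d n : ℕ} {H : Matrix (Fin d) (Fin n) ℝ} (hH : H.rank = d) :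
    LinearIndependent ℝ fun j => toE (H j) :=
  (Matrix.linearIndependent_row_of_rank_eq_card (hH.trans (Fintype.card_fin d).symm)).map'
    (WithLp.linearEquiv 2 ℝ (Fin n → ℝ)).symm.toLinearMap (LinearEquiv.ker _)

theorem ancestry_criterion_via_projections_general
    {d n K : ℕ}
    (E : Fin d → Fin d → Prop) (hG : IsDAG E)
    (H : Matrix (Fin d) (Fin n) ℝ) (hH : H.rank = d)
    (B : Fin K → Matrix (Fin d) (Fin d) ℝ)
    (hsupp : ∀ k, SupportMatches E (B k))
    (hnd : NodeNonDegenerate E B)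
    (S : Set (Fin d)) (hS : Ancestral E S) (i : Fin d) (hi : i ∉ S) :
    Module.finrank ℝ (Submodule.span ℝ (Set.range fun k : Fin K =>
        projPerp (Submodule.span ℝ ((fun s => toE ((B k * H) s)) '' S))
          (toE ((B k * H) i)))) = 1
      ↔ ans E i ⊆ S := by
  set h := fun j => toE (H j) with h_def
  set W := Submodule.span ℝ (h '' S)
  set P : EuclideanSpace ℝ (Fin n) →ₗ[ℝ] EuclideanSpace ℝ (Fin n) := Wᗮ.starProjection
  have hP : LinearMap.ker P = W := by
    simp [P, Submodule.ker_starProjection, Submodule.orthogonal_orthogonal]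
  have hq : (fun k => projPerp (Submodule.span ℝ ((fun s => toE ((B k * H) s)) '' S))
      (toE ((B k * H) i))) = fun k => (P ∘ₗ Fintype.linearCombination ℝ h) (B k i) := by
    funext k
    simp only [toE_mul_row, ← h_def, (hsupp k).span_linearCombination_rows_eq hG h hS]
    rfl
  have hspan : Submodule.span ℝ (Set.range fun k => (P ∘ₗ Fintype.linearCombination ℝ h) (B k i))
      = Submodule.span ℝ ((P ∘ h) '' barPa E i) := by
    rw [Set.range_comp' _ (fun k => B k i), ← Submodule.map_span,
      hnd.span_rows_eq_spanSubset hG hsupp i, Submodule.map_comp,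
      Pi.map_linearCombination_spanSubset, Submodule.map_span, Set.image_image]
    rfl
  rw [hq, hspan, (linearIndependent_toE_row hH).finrank_span_comp_image P hP,
    hG.ncard_barPa_diff_eq_one_iff hi, hS.ans_subset_iff]

/-- Ancestry criterion via projections (Proposition 5.1, first claim):
for an ancestral set `S` and `i ∉ S`, the span of the projections of the rows
`(M_k)_i` onto `W_k^⊥` is one-dimensional iff all ancestors of `i` lie in `S`. -/
theorem ancestry_criterion_via_projections
    {d n K : ℕ} (hn : d ≤ n)
    (E : Fin d → Fin d → Prop) (hG : IsDAG E)
    (H : Matrix (Fin d) (Fin n) ℝ) (hH : H.rank = d)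
    (B : Fin K → Matrix (Fin d) (Fin d) ℝ)
    (hsupp : ∀ k, SupportMatches E (B k))
    (hnd : NodeNonDegenerate E B)
    (S : Set (Fin d)) (hS : Ancestral E S) (i : Fin d) (hi : i ∉ S) :
    Module.finrank ℝ (Submodule.span ℝ (Set.range fun k : Fin K =>
        projPerp (Submodule.span ℝ ((fun s => toE ((B k * H) s)) '' S))
          (toE ((B k * H) i)))) = 1
      ↔ ans E i ⊆ S :=
  ancestry_criterion_via_projections_general E hG H hH B hsupp hnd S hS i hi
end

section
/- Row spans of the environment matrices (Lemma E.1 / span-Mk-rows). Let G be a DAG on [d], let H ∈ ℝ^{d×n} (n ≥ d) have full row rank with rows h_1,…,h_d, and let {B_k}_{k∈[K]} be a family of d×d real matrices with (B_k)_{ij} ≠ 0 ⟺ j ∈ \bar{pa}_G(i) that is node-level non-degenerate with respect to G. Set M_k = B_k H. Then for every node i ∈ [d], span{(M_k)_i : k ∈ [K]} = span{h_j : j ∈ \bar{pa}_G(i)}, where (M_k)_i denotes the i-th row of M_k. -/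
open Matrix MeasureTheory

/-!
The `i`-th rows of the `B_k` vanish outside `barPa E i`, so they span a subspace of
`span {e_j : j ∈ barPa E i}`; node-level non-degeneracy says the dimensions agree, so the two
spans coincide. Right multiplication by `H` sends `e_j` to the row `h_j`.
-/

theorem span_range_eq_spanSubset_of_finrank_eq {K ι κ : Type*} [Field K] [Finite ι]
    (v : κ → ι → K) (s : Set ι)
    (hv : ∀ k, ∀ j ∉ s, v k j = 0)
    (hrank : Module.finrank K (Submodule.span K (Set.range v)) = s.ncard) :
    Submodule.span K (Set.range v) = Pi.spanSubset K s := by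
  refine Submodule.eq_of_le_of_finrank_eq ?_ (by rw [hrank, Pi.dim_spanSubset])
  rw [Submodule.span_le]
  rintro _ ⟨k, rfl⟩
  exact Pi.mem_spanSubset_iff.2 (hv k)

theorem span_range_vecMul {R m n κ : Type*} [CommSemiring R] [Fintype m] (v : κ → m → R)
    (H : Matrix m n R) :
    Submodule.span R (Set.range fun k => v k ᵥ* H)
      = (Submodule.span R (Set.range v)).map H.vecMulLinear := by
  rw [Submodule.map_span, ← Set.range_comp]
  rfl

theorem map_vecMulLinear_spanSubset {R m n : Type*} [CommSemiring R] [Fintype m]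
    [DecidableEq m] (H : Matrix m n R) (s : Set m) :
    (Pi.spanSubset R s).map H.vecMulLinear = Submodule.span R ((fun j => H j) '' s) := by
  rw [Pi.spanSubset, Submodule.map_span, Set.image_image]
  congr 1
  refine Set.image_congr fun j _ => ?_
  simp only [Pi.basisFun_apply, Matrix.vecMulLinear_apply, single_one_vecMul, Matrix.row]

theorem IsDAG.irrefl {d : ℕ} {E : Fin d → Fin d → Prop} (hG : IsDAG E) (i : Fin d) : ¬ E i i :=
  fun h => hG i (Relation.TransGen.single h)

theorem ncard_barPa {d : ℕ} {E : Fin d → Fin d → Prop} {i : Fin d} (h : ¬ E i i) :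
    (barPa E i).ncard = (pa E i).ncard + 1 :=
  Set.ncard_insert_of_notMem h

theorem SupportMatches.apply_eq_zero {d : ℕ} {E : Fin d → Fin d → Prop}
    {B : Matrix (Fin d) (Fin d) ℝ} (h : SupportMatches E B) {i j : Fin d} (hj : j ∉ barPa E i) :
    B i j = 0 :=
  not_not.1 (mt (h i j).1 hj)

theorem span_Mk_rows_general {d n K : ℕ}
    (E : Fin d → Fin d → Prop) (hG : IsDAG E)
    (H : Matrix (Fin d) (Fin n) ℝ)
    (B : Fin K → Matrix (Fin d) (Fin d) ℝ)
    (hsupp : ∀ k, SupportMatches E (B k))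
    (hnd : NodeNonDegenerate E B) :
    ∀ i : Fin d,
      Submodule.span ℝ (Set.range fun k => (B k * H) i)
        = Submodule.span ℝ ((fun j => H j) '' barPa E i) := by
  intro i
  have hrows : Submodule.span ℝ (Set.range fun k => B k i) = Pi.spanSubset ℝ (barPa E i) :=
    span_range_eq_spanSubset_of_finrank_eq _ _ (fun k _ hj => (hsupp k).apply_eq_zero hj)
      (by rw [hnd i, ncard_barPa (hG.irrefl i)])
  simp only [mul_apply_eq_vecMul]
  rw [span_range_vecMul, hrows, map_vecMulLinear_spanSubset]

/-- Row spans of the environment matrices (Lemma E.1): for every node `i`,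
`span{(M_k)_i : k ∈ [K]} = span{h_j : j ∈ \bar{pa}_G(i)}` where `M_k = B_k H`. -/
theorem span_Mk_rows {d n K : ℕ} (hn : d ≤ n)
    (E : Fin d → Fin d → Prop) (hG : IsDAG E)
    (H : Matrix (Fin d) (Fin n) ℝ) (hH : H.rank = d)
    (B : Fin K → Matrix (Fin d) (Fin d) ℝ)
    (hsupp : ∀ k, SupportMatches E (B k))
    (hnd : NodeNonDegenerate E B) :
    ∀ i : Fin d,
      Submodule.span ℝ (Set.range fun k => (B k * H) i)
        = Submodule.span ℝ ((fun j => H j) '' barPa E i) :=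
  span_Mk_rows_general E hG H B hsupp hnd
end

section
/- Row spans over ancestral sets coincide across environments (Lemma E.2 / alg-same-spaces). Let G be a DAG on [d], let H ∈ ℝ^{d×n} (n ≥ d) have full row rank with rows h_1,…,h_d, and let {B_k}_{k∈[K]} be d×d real matrices with (B_k)_{ij} ≠ 0 ⟺ j ∈ \bar{pa}_G(i) (in particular all diagonal entries of each B_k are nonzero). Set M_k = B_k H. Let Ŝ ⊆ [d] be an ancestral set and define V_k = span{(M_k)_s : s ∈ Ŝ} ⊆ ℝ^n for each k ∈ [K]. Then V_1 = V_2 = ⋯ = V_K = span{h_s : s ∈ Ŝ}. -/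
open Matrix MeasureTheory

/-- Row spans over ancestral sets coincide across environments (Lemma E.2):
for an ancestral set `Ŝ`, `span{(M_k)_s : s ∈ Ŝ} = span{h_s : s ∈ Ŝ}` for every `k`. -/
theorem alg_same_spaces {d n K : ℕ} (hn : d ≤ n)
    (E : Fin d → Fin d → Prop) (hG : IsDAG E)
    (H : Matrix (Fin d) (Fin n) ℝ) (hH : H.rank = d)
    (B : Fin K → Matrix (Fin d) (Fin d) ℝ)
    (hsupp : ∀ k, SupportMatches E (B k))
    (S : Set (Fin d)) (hS : Ancestral E S) :
    ∀ k : Fin K,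
      Submodule.span ℝ ((fun s => (B k * H) s) '' S)
        = Submodule.span ℝ ((fun s => H s) '' S) := by

  intro k
  have hwf : WellFounded (Relation.TransGen E) := by
    haveI : IsIrrefl (Fin d) (Relation.TransGen E) := ⟨hG⟩
    haveI : IsTrans (Fin d) (Relation.TransGen E) := ⟨fun _ _ _ => Relation.TransGen.trans⟩
    exact Finite.wellFounded_of_trans_of_irrefl _
  have hrow : ∀ s : Fin d, (B k * H) s = ∑ j, B k s j • H j := by
    intro s; ext j'
    simp [Matrix.mul_apply, Finset.sum_apply]
  apply le_antisymm
  · rw [Submodule.span_le]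
    rintro _ ⟨s, hsS, rfl⟩
    show (B k * H) s ∈ _
    rw [hrow]
    apply Submodule.sum_mem
    intro j _
    by_cases hj : B k s j = 0
    · simp [hj]
    · have hjS : j ∈ S := by
        rcases (hsupp k s j).mp hj with rfl | hpa
        · exact hsS
        · exact hS s hsS (Relation.TransGen.single hpa)
      exact Submodule.smul_mem _ _ (Submodule.subset_span ⟨j, hjS, rfl⟩)
  · rw [Submodule.span_le]
    have main : ∀ s : Fin d, s ∈ S →
        H s ∈ Submodule.span ℝ ((fun s => (B k * H) s) '' S) := by
      intro s
      induction s using WellFounded.induction hwf with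
      | _ s ih =>
        intro hsS
        have hdiag : B k s s ≠ 0 := (hsupp k s s).mpr (Set.mem_insert _ _)
        have key : H s = (B k s s)⁻¹ •
            ((B k * H) s - ∑ j ∈ Finset.univ.erase s, B k s j • H j) := by
          rw [hrow, ← Finset.add_sum_erase _ _ (Finset.mem_univ s),
            add_sub_cancel_right, smul_smul, inv_mul_cancel₀ hdiag, one_smul]
        rw [key]
        apply Submodule.smul_mem
        apply Submodule.sub_mem
        · exact Submodule.subset_span ⟨s, hsS, rfl⟩
        · apply Submodule.sum_mem
          intro j hj
          by_cases hbz : B k s j = 0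
          · simp [hbz]
          · have hjne : j ≠ s := Finset.ne_of_mem_erase hj
            have hpa : E j s := by
              rcases (hsupp k s j).mp hbz with h | h
              · exact absurd h hjne
              · exact h
            have htg : Relation.TransGen E j s := Relation.TransGen.single hpa
            exact Submodule.smul_mem _ _ (ih j htg (hS s hsS htg))
    rintro _ ⟨s, hsS, rfl⟩
    exact main s hsS
end

section
/- Non-degenerate interventions in linear models imply node-level non-degeneracy (Lemma 7.1 / assumptions-relation). Let G be a DAG on [d] and K ≥ 1. For each node i and each k ∈ [K], let w_k(i) ∈ ℝ^{|pa_G(i)|} and ω_{k,i} > 0, and let ρ_i : ℝ → (0,∞) be a differentiable probability density. Define conditional densities p̂_k(z_i | z_{pa_G(i)}) = ω_{k,i}^{−1/2} ρ_i(ω_{k,i}^{−1/2}(z_i − ⟨w_k(i), z_{pa_G(i)}⟩)) (the conditional densities induced by the linear structural equation z_i = ⟨w_k(i), z_{pa_G(i)}⟩ + ω_{k,i}^{1/2} ε_i with ε_i distributed with density ρ_i). Suppose that for each node i ∈ [d] the family {p̂_k(·|·)}_{k∈[K]} is non-degenerate on node i at some point ẑ ∈ ℝ^d. Then, letting A_k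 ∈ ℝ^{d×d} be the matrix with (A_k)_{ij} = (w_k(i))_j for j ∈ pa_G(i) and 0 otherwise, Ω_k = diag(ω_{k,1},…,ω_{k,d}), and B_k = Ω_k^{−1/2}(I − A_k), the family {B_k}_{k∈[K]} is node-level non-degenerate: for every i ∈ [d], dim span{(B_k)_i : k ∈ [K]} = |pa_G(i)| + 1. -/
open Matrix MeasureTheory

/-- Non-degeneracy (Definition 7.1) of a family of conditional densities at node `i`
at the point `ẑ`, with distinguished base density `p e₀`: all densities are positive
at `ẑ`, and the matrix `[∂(p_{e₀}/p_e)/∂z_j]` (rows `e`, columns `j ∈ \bar{pa}_G(i)`)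
has full column rank, i.e. its rows span all of `ℝ^{\bar{pa}_G(i)}`. -/
def NonDegenerateAt {d : ℕ} {ι : Type*} (E : Fin d → Fin d → Prop) (i : Fin d)
    (p : ι → (Fin d → ℝ) → ℝ) (e₀ : ι) (zhat : Fin d → ℝ) : Prop :=
  (∀ e, 0 < p e zhat) ∧
  Submodule.span ℝ (Set.range fun e : ι =>
      fun j : barPa E i =>
        fderiv ℝ (fun z => p e₀ z / p e z) zhat (Pi.single (j : Fin d) 1)) = ⊤

/-!
At node `i` every density `p_k(· | ·)` depends on `z` only through the linear form `(B_k)_i ⬝ᵥ z`,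
so the gradient of `p_1 / p_k` lies in `span {(B_1)_i, (B_k)_i}`. Full column rank of the gradient
matrix on the coordinates `\bar{pa}(i)` therefore forces the rows `(B_k)_i`, which are supported on
`\bar{pa}(i)`, to span the whole `(|pa(i)| + 1)`-dimensional space of such vectors.
-/

theorem fderiv_mul_comp_mem_span {E : Type*} [NormedAddCommGroup E] [NormedSpace ℝ E]
    {f h : ℝ → ℝ} {L M : E →L[ℝ] ℝ} {x : E}
    (hf : DifferentiableAt ℝ f (L x)) (hh : DifferentiableAt ℝ h (M x)) :
    fderiv ℝ (fun z => f (L z) * h (M z)) x ∈ Submodule.span ℝ {L, M} := by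
  have hfL : HasFDerivAt (fun z => f (L z)) (deriv f (L x) • L) x :=
    hf.hasDerivAt.comp_hasFDerivAt x L.hasFDerivAt
  have hhM : HasFDerivAt (fun z => h (M z)) (deriv h (M x) • M) x :=
    hh.hasDerivAt.comp_hasFDerivAt x M.hasFDerivAt
  rw [(hfL.fun_mul hhM).fderiv, Submodule.mem_span_pair]
  exact ⟨h (M x) * deriv f (L x), f (L x) * deriv h (M x), by simp [smul_smul, add_comm]⟩

theorem fderiv_div_comp_dotProduct_apply_single_mem_span {ι : Type*} [Fintype ι] [DecidableEq ι]
    {f g : ℝ → ℝ} {a b x : ι → ℝ} (hf : DifferentiableAt ℝ f (a ⬝ᵥ x))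
    (hg : DifferentiableAt ℝ g (b ⬝ᵥ x)) (hgx : g (b ⬝ᵥ x) ≠ 0) :
    (fun j => fderiv ℝ (fun z => f (a ⬝ᵥ z) / g (b ⬝ᵥ z)) x (Pi.single j 1)) ∈
      Submodule.span ℝ {a, b} := by
  let dot (v : ι → ℝ) : (ι → ℝ) →L[ℝ] ℝ :=
    LinearMap.toContinuousLinearMap (dotProductEquiv ℝ ι v)
  have hdot (v z : ι → ℝ) : dot v z = v ⬝ᵥ z := by simp [dot]
  have hspan := fderiv_mul_comp_mem_span (h := fun t => (g t)⁻¹) (L := dot a) (M := dot b)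
    (by rwa [hdot]) (by rw [hdot]; exact hg.inv hgx)
  obtain ⟨α, β, hαβ⟩ := Submodule.mem_span_pair.mp hspan
  refine Submodule.mem_span_pair.mpr ⟨α, β, funext fun j => ?_⟩
  simp only [hdot, ← div_eq_mul_inv] at hαβ
  simp [← hαβ, hdot]

theorem finrank_eq_ncard_of_map_restrict_eq_top {K ι : Type*} [Field K] [Fintype ι] {T : Set ι}
    {S : Submodule K (ι → K)} (hS : S ≤ Submodule.pi Tᶜ fun _ => ⊥)
    (htop : S.map (LinearMap.funLeft K K ((↑) : T → ι)) = ⊤) :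
    Module.finrank K S = T.ncard := by
  let π := (LinearMap.funLeft K K ((↑) : T → ι)).comp S.subtype
  have hinj : Function.Injective π := by
    rw [← LinearMap.ker_eq_bot, Submodule.eq_bot_iff]
    rintro ⟨v, hv⟩ hπv
    ext j
    by_cases hj : j ∈ T
    · exact congrFun hπv ⟨j, hj⟩
    · simpa using hS hv j hj
  have hsurj : Function.Surjective π := by
    rw [← LinearMap.range_eq_top, LinearMap.range_comp, Submodule.range_subtype, htop]
  classical
  rw [(LinearEquiv.ofBijective π ⟨hinj, hsurj⟩).finrank_eq, Module.finrank_fintype_fun_eq_card,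
    ← Nat.card_eq_fintype_card, Nat.card_coe_set_eq]

theorem diagonal_mul_one_sub_row {n R : Type*} [Fintype n] [DecidableEq n] [Ring R] (c : n → R)
    (W : Matrix n n R) (i : n) :
    (diagonal c * (1 - W)) i = c i • (Pi.single i 1 - W i) := by
  ext j
  simp [diagonal_mul, one_eq_pi_single]

theorem nondegenerate_interventions_imply_node_nondegeneracy_general
    {d K : ℕ} (hK : 0 < K)
    (E : Fin d → Fin d → Prop) (hG : IsDAG E)
    -- weight matrices: `w k i j = (w_k(i))_j` for `j ∈ pa_G(i)`, `0` otherwise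
    (w : Fin K → Matrix (Fin d) (Fin d) ℝ)
    (hw : ∀ k i j, j ∉ pa E i → w k i j = 0)
    (ω : Fin K → Fin d → ℝ)
    -- the noise densities
    (ρ : Fin d → ℝ → ℝ)
    (hρdiff : ∀ i, Differentiable ℝ (ρ i))
    -- the induced conditional densities
    (p : Fin K → Fin d → (Fin d → ℝ) → ℝ)
    (hp : ∀ k i (z : Fin d → ℝ), p k i z =
        (Real.sqrt (ω k i))⁻¹ *
          ρ i ((Real.sqrt (ω k i))⁻¹ * (z i - ∑ j, w k i j * z j)))
    -- non-degeneracy at some point, for each node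
    (hnd : ∀ i, ∃ zhat : Fin d → ℝ,
        NonDegenerateAt E i (fun k => p k i) (⟨0, hK⟩ : Fin K) zhat)
    (B : Fin K → Matrix (Fin d) (Fin d) ℝ)
    (hB : ∀ k, B k = Matrix.diagonal (fun i => (Real.sqrt (ω k i))⁻¹) * (1 - w k)) :
    NodeNonDegenerate E B := by
  intro i
  obtain ⟨zhat, hpos, hspan⟩ := hnd i
  set S := Submodule.span ℝ (Set.range fun k => B k i)
  have hrow (k : Fin K) : B k i = (Real.sqrt (ω k i))⁻¹ • (Pi.single i 1 - w k i) := by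
    rw [hB, diagonal_mul_one_sub_row]
  have hdens (k : Fin K) : p k i = fun z => (Real.sqrt (ω k i))⁻¹ * ρ i (B k i ⬝ᵥ z) := by
    funext z
    rw [hp, hrow, smul_dotProduct, sub_dotProduct, single_one_dotProduct, dotProduct, smul_eq_mul]
  have hsupp : S ≤ Submodule.pi (barPa E i)ᶜ fun _ => ⊥ := by
    refine Submodule.span_le.mpr ?_
    rintro _ ⟨k, rfl⟩ j hj
    simp only [barPa, Set.mem_compl_iff, Set.mem_insert_iff, not_or] at hj
    simp [hrow, Ne.symm hj.1, hw k i j hj.2]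
  have htop : S.map (LinearMap.funLeft ℝ ℝ ((↑) : barPa E i → Fin d)) = ⊤ := by
    refine top_unique (hspan.symm.le.trans (Submodule.span_le.mpr ?_))
    rintro _ ⟨e, rfl⟩
    refine ⟨fun j => fderiv ℝ (fun z => p ⟨0, hK⟩ i z / p e i z) zhat (Pi.single j 1),
      Submodule.span_mono (s := {B ⟨0, hK⟩ i, B e i}) ?_ ?_, rfl⟩
    · exact Set.pair_subset (Set.mem_range_self _) (Set.mem_range_self e)
    · have hne := (hpos e).ne'
      simp only [hdens] at hne ⊢
      exact fderiv_div_comp_dotProduct_apply_single_mem_span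
        (f := fun t => (Real.sqrt (ω _ i))⁻¹ * ρ i t)
        (g := fun t => (Real.sqrt (ω e i))⁻¹ * ρ i t)
        ((hρdiff i _).const_mul _) ((hρdiff i _).const_mul _) hne
  rw [finrank_eq_ncard_of_map_restrict_eq_top hsupp htop, barPa,
    Set.ncard_insert_of_notMem fun h : i ∈ pa E i => hG i (.single h)]

/-- Non-degenerate interventions in linear models imply node-level non-degeneracy
(Lemma 7.1): if at every node the family of linear-Gaussian-type conditional densities
induced by `z_i = ⟨w_k(i), z_{pa(i)}⟩ + ω_{k,i}^{1/2} ε_i` is non-degenerate at some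
point, then the matrices `B_k = Ω_k^{-1/2}(I - A_k)` are node-level non-degenerate. -/
theorem nondegenerate_interventions_imply_node_nondegeneracy
    {d K : ℕ} (hK : 0 < K)
    (E : Fin d → Fin d → Prop) (hG : IsDAG E)
    -- weight matrices: `w k i j = (w_k(i))_j` for `j ∈ pa_G(i)`, `0` otherwise
    (w : Fin K → Matrix (Fin d) (Fin d) ℝ)
    (hw : ∀ k i j, j ∉ pa E i → w k i j = 0)
    (ω : Fin K → Fin d → ℝ) (hω : ∀ k i, 0 < ω k i)
    -- the noise densities
    (ρ : Fin d → ℝ → ℝ)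
    (hρpos : ∀ i t, 0 < ρ i t)
    (hρdiff : ∀ i, Differentiable ℝ (ρ i))
    (hρprob : ∀ i, ∫ t : ℝ, ρ i t = 1)
    -- the induced conditional densities
    (p : Fin K → Fin d → (Fin d → ℝ) → ℝ)
    (hp : ∀ k i (z : Fin d → ℝ), p k i z =
        (Real.sqrt (ω k i))⁻¹ *
          ρ i ((Real.sqrt (ω k i))⁻¹ * (z i - ∑ j, w k i j * z j)))
    -- non-degeneracy at some point, for each node
    (hnd : ∀ i, ∃ zhat : Fin d → ℝ,
        NonDegenerateAt E i (fun k => p k i) (⟨0, hK⟩ : Fin K) zhat)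
    (B : Fin K → Matrix (Fin d) (Fin d) ℝ)
    (hB : ∀ k, B k = Matrix.diagonal (fun i => (Real.sqrt (ω k i))⁻¹) * (1 - w k)) :
    NodeNonDegenerate E B :=
  nondegenerate_interventions_imply_node_nondegeneracy_general hK E hG w hw ω ρ hρdiff p hp hnd B hB
end

section
/- Effect-domination ambiguity is unavoidable for linear models (Theorem 8.1). Let G be a DAG on [d], K ≥ 1, n ≥ d. Suppose given a ground-truth linear model: H ∈ ℝ^{d×n} with full row rank; for each k ∈ [K], A_k ∈ ℝ^{d×d} with (A_k)_{ij} ≠ 0 ⟺ j ∈ pa_G(i), Ω_k diagonal with positive entries; and the family {B_k = Ω_k^{−1/2}(I − A_k)}_{k∈[K]} node-level non-degenerate with respect to G. Then there exist Ĥ ∈ ℝ^{d×n} with full row rank and, for each k, a matrix Â_k with (Â_k)_{ij} ≠ 0 ⟺ j ∈ pa_G(i) and a diagonal matrix Ω̂_k with positive entries, such that: (a) {B̂_k = Ω̂_k^{−1/2}(I − Â_k)}_{k∈[K]} is node-level non-degenerate with respect to G; (b) B̂_k Ĥ = B_k H for all k ∈ [K] (the hypothetical model generates exactly the same observations from the same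 noise in every environment); and (c) the invertible matrix M := B̂_1^{−1} B_1 (which equals B̂_k^{−1} B_k for every k, and satisfies Ĥ = M H, i.e. the recovered latent variables are v = M z) has M_{ij} ≠ 0 for EVERY j ∈ \bar{dom}_G(i). Moreover, if additionally there is a partition [K] = ⋃_{i=1}^d 𝔈_i such that each group 𝔈_i consists of single-node interventions on node i (for any two distinct k, ℓ ∈ 𝔈_i and any j ∈ [d], the j-th rows of B_k and B_ℓ are equal if and only if j ≠ i), then Ĥ, Â_k, Ω̂_k can be chosen so that additionally, for the same partition, any two distinct k, ℓ ∈ 𝔈_i have the j-th rows of B̂_k and B̂_ℓ equal if and only if j ≠ i. -/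
open Matrix MeasureTheory

/-- The properties required of a hypothetical alternative solution `(Ĥ, Â_k, Ω̂_k)`
exhibiting the effect-domination ambiguity for the ground-truth model `(H, B_k)`
with graph `G`. -/
def AmbiguousSolution {d n K : ℕ} (E : Fin d → Fin d → Prop)
    (H : Matrix (Fin d) (Fin n) ℝ) (B : Fin K → Matrix (Fin d) (Fin d) ℝ)
    (Hhat : Matrix (Fin d) (Fin n) ℝ) (Ahat : Fin K → Matrix (Fin d) (Fin d) ℝ)
    (ωhat : Fin K → Fin d → ℝ) (Bhat : Fin K → Matrix (Fin d) (Fin d) ℝ)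
    (M : Matrix (Fin d) (Fin d) ℝ) : Prop :=
  -- (i') full row rank
  Hhat.rank = d ∧
  -- (ii') support of `Â_k` matches `G`, `Ω̂_k` diagonal positive
  (∀ k i j, Ahat k i j ≠ 0 ↔ j ∈ pa E i) ∧
  (∀ k i, 0 < ωhat k i) ∧
  (∀ k, Bhat k = Matrix.diagonal (fun i => (Real.sqrt (ωhat k i))⁻¹) * (1 - Ahat k)) ∧
  -- (a) node-level non-degeneracy
  NodeNonDegenerate E Bhat ∧
  -- (b) identical observations from the same noise in every environment
  (∀ k, Bhat k * Hhat = B k * H) ∧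
  -- (c) the mixing matrix `M = B̂_k⁻¹ B_k` is invertible, satisfies `Ĥ = M H`,
  -- and has `M i j ≠ 0` for every `j ∈ \bar{dom}_G(i)`
  IsUnit M ∧
  (∀ k, (Bhat k)⁻¹ * B k = M) ∧
  Hhat = M * H ∧
  (∀ i j, j ∈ barDom E i → M i j ≠ 0)

/-!
The ambiguity is the mixing matrix `M = I + ε P`, where `P` is the adjacency matrix of effect
domination (`P i j = 1` iff `j ∈ dom_G(i)`), and `B̂_k = B_k M⁻¹`, `Ĥ = M H`. Since `A_k` and
`P` are supported on edges of the DAG they are nilpotent, so `B_k` and `M` are invertible.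
The point of effect domination is that both `\bar{pa}_G(i)` and the ancestor set of `i` are
closed under passing from a node to the nodes dominating it, so `M`, and with it `M⁻¹`, is block
triangular for each of these sets. Hence row `i` of `B̂_k` is still supported on
`\bar{pa}_G(i)` and keeps its diagonal entry; its parent entries depend continuously on `ε` and
are nonzero at `ε = 0`, so a small `ε ≠ 0` keeps the support exactly `\bar{pa}_G(i)`. Right
multiplication by the invertible `M⁻¹` preserves the dimension of spans of rows and which rows
coincide.
-/

open Filter Topology

namespace Matrix

variable {ι R : Type*}

lemma pow_apply_eq_zero_of_lt [Fintype ι] [DecidableEq ι] [Semiring R] {C : Matrix ι ι R}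
    (r : ι → ℕ) (hC : ∀ i j, C i j ≠ 0 → r j < r i) (m : ℕ) {i j : ι} (h : r i < r j + m) :
    (C ^ m) i j = 0 := by
  induction m generalizing i with
  | zero =>
    rw [pow_zero, one_apply_ne]
    rintro rfl
    omega
  | succ m ih =>
    rw [pow_succ', mul_apply]
    refine Finset.sum_eq_zero fun l _ => ?_
    by_cases hl : C i l = 0
    · rw [hl, zero_mul]
    · rw [ih (by have := hC i l hl; omega), mul_zero]

lemma isNilpotent_of_apply_ne_zero_lt [Fintype ι] [DecidableEq ι] [Semiring R]
    {C : Matrix ι ι R} (r : ι → ℕ) (hC : ∀ i j, C i j ≠ 0 → r j < r i) : IsNilpotent C :=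
  ⟨Finset.univ.sup r + 1, by
    ext i j
    have := Finset.le_sup (f := r) (Finset.mem_univ i)
    exact pow_apply_eq_zero_of_lt r hC _ (by omega)⟩

lemma blockTriangular_mem_iff [Zero R] {X : Matrix ι ι R} {S : Set ι} :
    X.BlockTriangular (· ∈ S) ↔ ∀ i ∈ S, ∀ j ∉ S, X i j = 0 := by
  simp only [BlockTriangular, lt_iff_le_not_ge, le_Prop_eq]
  exact ⟨fun h i hi j hj => h ⟨fun h => (hj h).elim, fun h' => hj (h' hi)⟩,
    fun h i j hij =>
      h i (by_contra fun hi => hij.2 fun h => (hi h).elim) j fun hj => hij.2 fun _ => hj⟩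

lemma mul_apply_eq_zero_of_blockTriangular [Fintype ι] [NonUnitalNonAssocSemiring R]
    {X Y : Matrix ι ι R} {S : Set ι} {i j : ι} (hX : ∀ l ∉ S, X i l = 0)
    (hY : Y.BlockTriangular (· ∈ S)) (hj : j ∉ S) : (X * Y) i j = 0 := by
  rw [mul_apply]
  refine Finset.sum_eq_zero fun l _ => ?_
  by_cases hl : l ∈ S
  · rw [blockTriangular_mem_iff.1 hY l hl j hj, mul_zero]
  · rw [hX l hl, zero_mul]

lemma mul_apply_self_eq [Fintype ι] [NonUnitalNonAssocSemiring R] {X Y : Matrix ι ι R} {i : ι}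
    (h : ∀ l ≠ i, X i l = 0 ∨ Y l i = 0) : (X * Y) i i = X i i * Y i i := by
  rw [mul_apply]
  exact Finset.sum_eq_single i
    (fun l _ hl => (h l hl).elim (fun h0 => by rw [h0, zero_mul]) fun h0 => by rw [h0, mul_zero])
    (fun hi => (hi (Finset.mem_univ i)).elim)

lemma eventually_apply_ne_zero {α m n : Type*} [Finite m] [Finite n] [TopologicalSpace R]
    [T1Space R] [Zero R] {l : Filter α} {f : α → Matrix m n R} {X : Matrix m n R}
    (h : Tendsto f l (𝓝 X)) : ∀ᶠ x in l, ∀ i j, X i j ≠ 0 → f x i j ≠ 0 := by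
  simp only [eventually_all]
  intro i j hX
  exact (tendsto_pi_nhds.1 (tendsto_pi_nhds.1 h i) j).eventually_ne hX

lemma mul_row_eq_iff [Fintype ι] [DecidableEq ι] {K : Type*} [Field K] {X Y Q : Matrix ι ι K}
    (hQ : IsUnit Q) {i j : ι} :
    (X * Q) i = (Y * Q) j ↔ X i = Y j := by
  rw [mul_apply_eq_vecMul, mul_apply_eq_vecMul]
  exact (vecMul_injective_iff_isUnit.2 hQ).eq_iff

end Matrix

variable {d : ℕ} {E : Fin d → Fin d → Prop}

namespace IsDAG

lemma irrefl_s11 (hG : IsDAG E) (i : Fin d) : ¬ E i i :=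
  fun h => hG i (.single h)

lemma ncard_ans_lt (hG : IsDAG E) {i j : Fin d} (h : E j i) :
    (ans E j).ncard < (ans E i).ncard :=
  Set.ncard_lt_ncard ⟨fun _ hk => .tail hk h, fun hsub => hG j (hsub (.single h))⟩
    (Set.toFinite _)

lemma isNilpotent {R : Type*} [Semiring R] (hG : IsDAG E) {C : Matrix (Fin d) (Fin d) R}
    (hC : ∀ i j, C i j ≠ 0 → j ∈ pa E i) : IsNilpotent C :=
  isNilpotent_of_apply_ne_zero_lt (fun i => (ans E i).ncard) fun i j h =>
    hG.ncard_ans_lt (hC i j h)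

end IsDAG

lemma domSet_subset_pa (i : Fin d) : domSet E i ⊆ pa E i :=
  fun _ h => h.1

lemma domSet_subset_pa_of_mem_barPa {i l : Fin d} (hl : l ∈ barPa E i) :
    domSet E l ⊆ pa E i := by
  rcases hl with rfl | hl
  · exact domSet_subset_pa l
  · exact fun _ hj => hj.2 hl

lemma domSet_subset_ans_of_mem_ans {i l : Fin d} (hl : l ∈ ans E i) : domSet E l ⊆ ans E i :=
  fun _ hj => .head hj.1 hl

open Classical in
noncomputable def domMatrix (E : Fin d → Fin d → Prop) : Matrix (Fin d) (Fin d) ℝ :=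
  of fun i j => if j ∈ domSet E i then 1 else 0

lemma domMatrix_apply_ne_zero_iff {i j : Fin d} : domMatrix E i j ≠ 0 ↔ j ∈ domSet E i := by
  classical
  simp [domMatrix]

noncomputable def domMixing (E : Fin d → Fin d → Prop) (ε : ℝ) : Matrix (Fin d) (Fin d) ℝ :=
  1 + ε • domMatrix E

@[simp]
lemma domMixing_zero : domMixing E 0 = 1 := by
  simp [domMixing]

lemma domMixing_apply_of_ne {ε : ℝ} {i j : Fin d} (hij : i ≠ j) :
    domMixing E ε i j = ε * domMatrix E i j := by
  simp [domMixing, one_apply_ne hij]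

lemma domMixing_apply_self (hG : IsDAG E) (ε : ℝ) (i : Fin d) : domMixing E ε i i = 1 := by
  have : domMatrix E i i = 0 :=
    not_not.1 fun h => hG.irrefl_s11 i (domMatrix_apply_ne_zero_iff.1 h).1
  simp [domMixing, this]

lemma domMixing_apply_ne_zero (hG : IsDAG E) {ε : ℝ} (hε : ε ≠ 0) {i j : Fin d}
    (hj : j ∈ barDom E i) : domMixing E ε i j ≠ 0 := by
  rcases hj with rfl | hj
  · simp [domMixing_apply_self hG]
  · rw [domMixing_apply_of_ne (by rintro rfl; exact hG.irrefl_s11 i hj.1)]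
    exact mul_ne_zero hε (domMatrix_apply_ne_zero_iff.2 hj)

lemma isUnit_domMixing (hG : IsDAG E) (ε : ℝ) : IsUnit (domMixing E ε) :=
  ((hG.isNilpotent fun _ _ h => domSet_subset_pa _ (domMatrix_apply_ne_zero_iff.1 h)).smul
    ε).isUnit_one_add

lemma blockTriangular_domMixing {ε : ℝ} {S : Set (Fin d)} (hS : ∀ l ∈ S, domSet E l ⊆ S) :
    (domMixing E ε).BlockTriangular (· ∈ S) := by
  refine blockTriangular_mem_iff.2 fun i hi j hj => ?_
  rw [domMixing_apply_of_ne (by rintro rfl; exact hj hi)]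
  exact mul_eq_zero_of_right ε (not_not.1 fun h => hj (hS i hi (domMatrix_apply_ne_zero_iff.1 h)))

lemma blockTriangular_inv_domMixing (hG : IsDAG E) {ε : ℝ} {S : Set (Fin d)}
    (hS : ∀ l ∈ S, domSet E l ⊆ S) : (domMixing E ε)⁻¹.BlockTriangular (· ∈ S) :=
  have := (isUnit_domMixing hG ε).invertible
  blockTriangular_inv_of_blockTriangular (blockTriangular_domMixing hS)

lemma inv_domMixing_apply_of_mem_ans (hG : IsDAG E) {ε : ℝ} {i l : Fin d} (hl : l ∈ ans E i) :
    (domMixing E ε)⁻¹ l i = 0 :=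
  blockTriangular_mem_iff.1
    (blockTriangular_inv_domMixing hG fun _ => domSet_subset_ans_of_mem_ans) l hl i (hG i)

lemma inv_domMixing_apply_self (hG : IsDAG E) (ε : ℝ) (i : Fin d) :
    (domMixing E ε)⁻¹ i i = 1 := by
  have h := congr_fun₂ (mul_nonsing_inv _ ((isUnit_domMixing hG ε).map detMonoidHom)) i i
  rwa [mul_apply_self_eq, domMixing_apply_self hG, one_mul, one_apply_eq] at h
  intro l hl
  by_cases hli : l ∈ domSet E i
  · exact .inr (inv_domMixing_apply_of_mem_ans hG (.single hli.1))
  · exact .inl (by rw [domMixing_apply_of_ne (Ne.symm hl),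
      not_not.1 (mt domMatrix_apply_ne_zero_iff.1 hli), mul_zero])

lemma continuousAt_inv_domMixing : ContinuousAt (fun ε => (domMixing E ε)⁻¹) 0 := by
  have hinv : ContinuousAt Inv.inv (domMixing E 0) := continuousAt_matrix_inv _ (by simp)
  exact hinv.comp (continuous_const.add (continuous_id.smul continuous_const)).continuousAt

lemma mul_inv_domMixing_apply_self (hG : IsDAG E) {X : Matrix (Fin d) (Fin d) ℝ}
    (hX : SupportMatches E X) (ε : ℝ) (i : Fin d) : (X * (domMixing E ε)⁻¹) i i = X i i := by
  rw [mul_apply_self_eq, inv_domMixing_apply_self hG, mul_one]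
  intro l hl
  by_cases hli : l ∈ pa E i
  · exact .inr (inv_domMixing_apply_of_mem_ans hG (.single hli))
  · exact .inl (not_not.1 fun h => ((hX i l).1 h).elim hl hli)

lemma mul_inv_domMixing_apply_of_notMem (hG : IsDAG E) {X : Matrix (Fin d) (Fin d) ℝ}
    (hX : SupportMatches E X) (ε : ℝ) {i j : Fin d} (hj : j ∉ barPa E i) :
    (X * (domMixing E ε)⁻¹) i j = 0 :=
  mul_apply_eq_zero_of_blockTriangular (fun _ hl => not_not.1 (mt (hX i _).1 hl))
    (blockTriangular_inv_domMixing hG fun _ hl =>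
      (domSet_subset_pa_of_mem_barPa hl).trans (Set.subset_insert _ _)) hj

lemma eventually_supportMatches_mul_inv_domMixing (hG : IsDAG E) {K : ℕ}
    {X : Fin K → Matrix (Fin d) (Fin d) ℝ} (hX : ∀ k, SupportMatches E (X k)) :
    ∀ᶠ ε in 𝓝 0, ∀ k, SupportMatches E (X k * (domMixing E ε)⁻¹) := by
  have hlim (k : Fin K) : Tendsto (fun ε => X k * (domMixing E ε)⁻¹) (𝓝 0) (𝓝 (X k)) := by
    simpa [Pi.mul_def] using (continuousAt_const.mul continuousAt_inv_domMixing).tendsto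
  filter_upwards [eventually_all.2 fun k => eventually_apply_ne_zero (hlim k)] with ε hε k i j
  exact ⟨fun h => not_not.1 (mt (mul_inv_domMixing_apply_of_notMem hG (hX k) ε) h),
    fun h => hε k i j ((hX k i j).2 h)⟩

section StructuralForm

variable {w : Fin d → ℝ} {A X : Matrix (Fin d) (Fin d) ℝ}

lemma diagonal_mul_one_sub_apply_self (hG : IsDAG E) (hA : ∀ i j, A i j ≠ 0 ↔ j ∈ pa E i)
    (i : Fin d) : (diagonal w * (1 - A)) i i = w i := by
  have : A i i = 0 := not_not.1 fun h => hG.irrefl_s11 i ((hA i i).1 h)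
  simp [diagonal_mul, this]

lemma supportMatches_diagonal_mul_one_sub (hG : IsDAG E) (hw : ∀ i, w i ≠ 0)
    (hA : ∀ i j, A i j ≠ 0 ↔ j ∈ pa E i) : SupportMatches E (diagonal w * (1 - A)) := by
  intro i j
  rcases eq_or_ne j i with rfl | hji
  · simpa [diagonal_mul_one_sub_apply_self hG hA, barPa] using hw j
  · simp [diagonal_mul, one_apply_ne hji.symm, hw i, hA, barPa, hji]

lemma isUnit_diagonal_mul_one_sub (hG : IsDAG E) (hw : ∀ i, w i ≠ 0)
    (hA : ∀ i j, A i j ≠ 0 ↔ j ∈ pa E i) : IsUnit (diagonal w * (1 - A)) :=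
  (isUnit_diagonal.2 (Pi.isUnit_iff.2 fun i => (hw i).isUnit)).mul
    (hG.isNilpotent fun i j => (hA i j).1).isUnit_one_sub

lemma exists_eq_diagonal_mul_one_sub (hG : IsDAG E) (hw : ∀ i, w i ≠ 0)
    (hX : SupportMatches E X) (hdiag : ∀ i, X i i = w i) :
    ∃ A : Matrix (Fin d) (Fin d) ℝ,
      (∀ i j, A i j ≠ 0 ↔ j ∈ pa E i) ∧ X = diagonal w * (1 - A) := by
  refine ⟨1 - diagonal w⁻¹ * X, fun i j => ?_, ?_⟩
  · rcases eq_or_ne j i with rfl | hji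
    · simpa [diagonal_mul, hdiag, hw, pa] using hG.irrefl_s11 j
    · simp [diagonal_mul, one_apply_ne hji.symm, hw, hX i j, barPa, hji]
  · rw [sub_sub_cancel, ← mul_assoc, diagonal_mul_diagonal]
    simp [hw]

end StructuralForm

lemma NodeNonDegenerate.mul_right {K : ℕ} {B : Fin K → Matrix (Fin d) (Fin d) ℝ}
    (h : NodeNonDegenerate E B) {Q : Matrix (Fin d) (Fin d) ℝ} (hQ : IsUnit Q) :
    NodeNonDegenerate E fun k => B k * Q := by
  intro i
  have hrows :
      (Set.range fun k => (B k * Q) i) = vecMulLinear Q '' Set.range fun k => B k i := by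
    rw [← Set.range_comp]
    simp [Function.comp_def, mul_apply_eq_vecMul]
  rw [hrows, ← Submodule.map_span,
    ← (Submodule.equivMapOfInjective _ (vecMul_injective_iff_isUnit.2 hQ) _).finrank_eq]
  exact h i

theorem exists_ambiguousSolution {d n K : ℕ} {E : Fin d → Fin d → Prop} (hG : IsDAG E)
    {H : Matrix (Fin d) (Fin n) ℝ} (hH : H.rank = d) {A : Fin K → Matrix (Fin d) (Fin d) ℝ}
    (hA : ∀ k i j, A k i j ≠ 0 ↔ j ∈ pa E i) {ω : Fin K → Fin d → ℝ} (hω : ∀ k i, 0 < ω k i)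
    {B : Fin K → Matrix (Fin d) (Fin d) ℝ}
    (hB : ∀ k, B k = diagonal (fun i => (Real.sqrt (ω k i))⁻¹) * (1 - A k))
    (hnd : NodeNonDegenerate E B) :
    ∃ M : Matrix (Fin d) (Fin d) ℝ, IsUnit M ∧
      ∃ Ahat, AmbiguousSolution E H B (M * H) Ahat ω (fun k => B k * M⁻¹) M := by
  have hw : ∀ k i, (Real.sqrt (ω k i))⁻¹ ≠ 0 := fun k i => by positivity [hω k i]
  have hBsupp : ∀ k, SupportMatches E (B k) := fun k =>
    hB k ▸ supportMatches_diagonal_mul_one_sub hG (hw k) (hA k)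
  obtain ⟨ε, hsupp, hε⟩ :=
    ((eventually_supportMatches_mul_inv_domMixing hG hBsupp).filter_mono nhdsWithin_le_nhds
      |>.and (self_mem_nhdsWithin (s := {0}ᶜ))).exists
  set M := domMixing E ε
  have hM : IsUnit M.det := (isUnit_domMixing hG ε).map detMonoidHom
  have hBunit : ∀ k, IsUnit (B k).det := fun k =>
    (hB k ▸ isUnit_diagonal_mul_one_sub hG (hw k) (hA k)).map detMonoidHom
  choose Ahat hAhat using fun k => exists_eq_diagonal_mul_one_sub hG (hw k) (hsupp k) fun i => by
    rw [mul_inv_domMixing_apply_self hG (hBsupp k), hB k,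
      diagonal_mul_one_sub_apply_self hG (hA k)]
  refine ⟨M, (isUnit_iff_isUnit_det M).2 hM, Ahat,
    by rw [rank_mul_eq_right_of_isUnit_det _ _ hM, hH], fun k => (hAhat k).1, hω,
    fun k => (hAhat k).2, hnd.mul_right ((isUnit_iff_isUnit_det _).2 (isUnit_nonsing_inv_det _ hM)),
    fun k => ?_, (isUnit_iff_isUnit_det M).2 hM, fun k => ?_, rfl,
    fun i j hj => domMixing_apply_ne_zero hG hε hj⟩
  · rw [Matrix.mul_assoc, ← Matrix.mul_assoc M⁻¹, nonsing_inv_mul _ hM, Matrix.one_mul]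
  · rw [Matrix.mul_inv_rev, nonsing_inv_nonsing_inv _ hM, mul_assoc, nonsing_inv_mul _ (hBunit k),
      mul_one]

theorem linear_ambiguity_general
    {d n K : ℕ}
    (E : Fin d → Fin d → Prop) (hG : IsDAG E)
    (H : Matrix (Fin d) (Fin n) ℝ) (hH : H.rank = d)
    (A : Fin K → Matrix (Fin d) (Fin d) ℝ)
    (hA : ∀ k i j, A k i j ≠ 0 ↔ j ∈ pa E i)
    (ω : Fin K → Fin d → ℝ) (hω : ∀ k i, 0 < ω k i)
    (B : Fin K → Matrix (Fin d) (Fin d) ℝ)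
    (hB : ∀ k, B k = Matrix.diagonal (fun i => (Real.sqrt (ω k i))⁻¹) * (1 - A k))
    (hnd : NodeNonDegenerate E B) :
    (∃ Hhat Ahat ωhat Bhat M, AmbiguousSolution E H B Hhat Ahat ωhat Bhat M) ∧
    (∀ part : Fin K → Fin d,
      (∀ k l, k ≠ l → part k = part l → ∀ j, (B k j = B l j ↔ j ≠ part k)) →
      ∃ Hhat Ahat ωhat Bhat M,
        AmbiguousSolution E H B Hhat Ahat ωhat Bhat M ∧
        ∀ k l, k ≠ l → part k = part l → ∀ j, (Bhat k j = Bhat l j ↔ j ≠ part k)) := by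
  obtain ⟨M, hM, Ahat, hsol⟩ := exists_ambiguousSolution hG hH hA hω hB hnd
  refine ⟨⟨_, _, _, _, _, hsol⟩, fun part hpart => ⟨_, _, _, _, _, hsol, fun k l hkl hpkl j => ?_⟩⟩
  rw [mul_row_eq_iff (isUnit_nonsing_inv_iff.2 hM)]
  exact hpart k l hkl hpkl j

/-- Effect-domination ambiguity is unavoidable for linear models (Theorem 8.1). -/
theorem linear_ambiguity
    {d n K : ℕ} (hK : 1 ≤ K) (hn : d ≤ n)
    (E : Fin d → Fin d → Prop) (hG : IsDAG E)
    (H : Matrix (Fin d) (Fin n) ℝ) (hH : H.rank = d)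
    (A : Fin K → Matrix (Fin d) (Fin d) ℝ)
    (hA : ∀ k i j, A k i j ≠ 0 ↔ j ∈ pa E i)
    (ω : Fin K → Fin d → ℝ) (hω : ∀ k i, 0 < ω k i)
    (B : Fin K → Matrix (Fin d) (Fin d) ℝ)
    (hB : ∀ k, B k = Matrix.diagonal (fun i => (Real.sqrt (ω k i))⁻¹) * (1 - A k))
    (hnd : NodeNonDegenerate E B) :
    (∃ Hhat Ahat ωhat Bhat M, AmbiguousSolution E H B Hhat Ahat ωhat Bhat M) ∧
    (∀ part : Fin K → Fin d,
      (∀ k l, k ≠ l → part k = part l → ∀ j, (B k j = B l j ↔ j ≠ part k)) →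
      ∃ Hhat Ahat ωhat Bhat M,
        AmbiguousSolution E H B Hhat Ahat ωhat Bhat M ∧
        ∀ k l, k ≠ l → part k = part l → ∀ j, (Bhat k j = Bhat l j ↔ j ≠ part k)) :=
  linear_ambiguity_general E hG H hH A hA ω hω B hB hnd
end

section
/- Effect-respecting linear mixtures preserve the causal factorization (Proposition 8.1). Let G be a DAG on [d] and let M ∈ M^0_dom(G) (M is an invertible d×d real matrix with M_{ij} ≠ 0 ⟹ j ∈ \bar{dom}_G(i)). Let p : ℝ^d → (0,∞) be a probability density of the form p(z) = ∏_{i=1}^d φ_i(z_{\bar{pa}_G(i)}), where each φ_i is a positive measurable function of the coordinates z_j, j ∈ \bar{pa}_G(i), normalized so that ∫_ℝ φ_i(t, z_{pa_G(i)}) dt = 1 for all values of z_{pa_G(i)} (i.e. the φ_i are conditional densities of z_i given z_{pa_G(i)}). Then the density of v = M z, namely q(v) = p(M^{−1} v)·|det M|^{−1}, can be written as q(v) = ∏_{i=1}^d ψ_i(v_{\bar{pa}_G(i)}), where each ψ_i is a positive measurable function of the coordinates v_j, j ∈ \bar{pa}_G(i), with ∫_ℝ ψ_i(t, v_{pa_G(i)})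 dt = 1 for all values of v_{pa_G(i)}. In other words, v can be viewed as generated from the same causal graph G. -/
open Matrix MeasureTheory

section Aux
variable {d : ℕ} {E : Fin d → Fin d → Prop}

lemma aux_no_self (hG : IsDAG E) (i : Fin d) : ¬ E i i := fun h => hG i (.single h)

lemma aux_no_two (hG : IsDAG E) {i j : Fin d} (h1 : E i j) (h2 : E j i) : False :=
  hG i (.tail (.single h1) h2)

noncomputable def rk (E : Fin d → Fin d → Prop) (i : Fin d) : ℕ := (ans E i).ncard

lemma rk_lt (hG : IsDAG E) {j i : Fin d} (h : E j i) : rk E j < rk E i := by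
  have hsub : ans E j ⊆ ans E i := fun k hk => hk.tail h
  have hmem : j ∈ ans E i := .single h
  have hnot : j ∉ ans E j := fun hj => hG j hj
  exact Set.ncard_lt_ncard ((Set.ssubset_iff_of_subset hsub).2 ⟨j, hmem, hnot⟩)
    (Set.toFinite _)

lemma barDom_trans (hG : IsDAG E) {i j k : Fin d}
    (hk : k ∈ barDom E i) (hj : j ∈ barDom E k) : j ∈ barDom E i := by
  rcases hk with rfl | hk
  · exact hj
  rcases hj with rfl | hj
  · exact Or.inr hk
  · refine Or.inr ⟨?_, fun x hx => hj.2 (hk.2 hx)⟩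
    exact hj.2 hk.1

lemma barDom_sub_barPa (i : Fin d) : barDom E i ⊆ barPa E i := by
  rintro j (rfl | hj)
  · exact Or.inl rfl
  · exact Or.inr hj.1

lemma barDom_sub_barPa_of_mem (hG : IsDAG E) {i j : Fin d} (hj : j ∈ barPa E i) :
    barDom E j ⊆ barPa E i := by
  rcases hj with rfl | hj
  · exact barDom_sub_barPa j
  rintro k (rfl | hk)
  · exact Or.inr hj
  · exact Or.inr (hk.2 hj)

/-- support predicate -/
def SuppIn (E : Fin d → Fin d → Prop) (N : Matrix (Fin d) (Fin d) ℝ) : Prop :=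
  ∀ i j, N i j ≠ 0 → j ∈ barDom E i

lemma SuppIn.one : SuppIn E (1 : Matrix (Fin d) (Fin d) ℝ) := by
  intro i j h
  rcases eq_or_ne j i with rfl | hne
  · exact Or.inl rfl
  · exact absurd (Matrix.one_apply_ne (Ne.symm hne)) h

lemma SuppIn.mul (hG : IsDAG E) {A B : Matrix (Fin d) (Fin d) ℝ}
    (hA : SuppIn E A) (hB : SuppIn E B) : SuppIn E (A * B) := by
  intro i j h
  rw [Matrix.mul_apply] at h
  obtain ⟨k, -, hk⟩ := Finset.exists_ne_zero_of_sum_ne_zero h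
  have h1 : A i k ≠ 0 := fun h0 => hk (by simp [h0])
  have h2 : B k j ≠ 0 := fun h0 => hk (by simp [h0])
  exact barDom_trans hG (hA i k h1) (hB k j h2)

lemma SuppIn.pow (hG : IsDAG E) {A : Matrix (Fin d) (Fin d) ℝ}
    (hA : SuppIn E A) (n : ℕ) : SuppIn E (A ^ n) := by
  induction n with
  | zero => simpa using SuppIn.one
  | succ n ih => rw [pow_succ]; exact ih.mul hG hA

lemma SuppIn.smul {A : Matrix (Fin d) (Fin d) ℝ} (hA : SuppIn E A) (c : ℝ) :
    SuppIn E (c • A) := by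
  intro i j h
  exact hA i j (fun h0 => h (by simp [Matrix.smul_apply, h0]))

lemma SuppIn.sum {s : Finset ℕ} {f : ℕ → Matrix (Fin d) (Fin d) ℝ}
    (hf : ∀ k ∈ s, SuppIn E (f k)) : SuppIn E (∑ k ∈ s, f k) := by
  intro i j h
  rw [Matrix.sum_apply] at h
  obtain ⟨k, hk, hk0⟩ := Finset.exists_ne_zero_of_sum_ne_zero h
  exact hf k hk i j hk0

lemma SuppIn.inv (hG : IsDAG E) {M : Matrix (Fin d) (Fin d) ℝ}
    (hM : SuppIn E M) (hMunit : IsUnit M) : SuppIn E M⁻¹ := by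
  have hdet : M.det ≠ 0 := by
    have := (Matrix.isUnit_iff_isUnit_det M).1 hMunit
    exact (isUnit_iff_ne_zero).1 this
  set c : ℕ → ℝ := fun k => M.charpoly.coeff k with hc
  have hc0 : c 0 ≠ 0 := by
    intro h0
    apply hdet
    have h0' : M.charpoly.coeff 0 = 0 := h0
    rw [Matrix.det_eq_sign_charpoly_coeff, h0', mul_zero]
  set n := M.charpoly.natDegree with hn
  have hCH : (0 : Matrix (Fin d) (Fin d) ℝ)
      = ∑ k ∈ Finset.range (n + 1), c k • M ^ k := by
    rw [← Polynomial.aeval_eq_sum_range, Matrix.aeval_self_charpoly]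
  have hsplit : (0 : Matrix (Fin d) (Fin d) ℝ)
      = (∑ k ∈ Finset.range n, c (k + 1) • M ^ (k + 1)) + c 0 • M ^ 0 := by
    rw [hCH, Finset.sum_range_succ']
  set N : Matrix (Fin d) (Fin d) ℝ :=
    (c 0)⁻¹ • (- ∑ k ∈ Finset.range n, c (k + 1) • M ^ k) with hN
  have hMN : M * N = 1 := by
    have hmul : M * (∑ k ∈ Finset.range n, c (k + 1) • M ^ k)
        = ∑ k ∈ Finset.range n, c (k + 1) • M ^ (k + 1) := by
      rw [Finset.mul_sum]
      refine Finset.sum_congr rfl fun k _ => ?_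
      rw [Matrix.mul_smul, pow_succ']
    have h1 : (∑ k ∈ Finset.range n, c (k + 1) • M ^ (k + 1)) = - (c 0 • (1 : Matrix (Fin d) (Fin d) ℝ)) := by
      have h2 := hsplit
      rw [pow_zero] at h2
      exact eq_neg_of_add_eq_zero_left h2.symm
    rw [hN, Matrix.mul_smul, mul_neg, hmul, h1, neg_neg, smul_smul,
      inv_mul_cancel₀ hc0, one_smul]
  have hinv : M⁻¹ = N := Matrix.inv_eq_right_inv hMN
  rw [hinv, hN]
  refine SuppIn.smul ?_ _
  intro i j h
  have : (∑ k ∈ Finset.range n, c (k + 1) • M ^ k) i j ≠ 0 := by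
    intro h0; apply h; simp [Matrix.neg_apply, h0]
  exact SuppIn.sum (fun k _ => (hM.pow hG k).smul _) i j this

lemma det_eq_prod_diag (hG : IsDAG E) (N : Matrix (Fin d) (Fin d) ℝ)
    (h : ∀ i j, N i j ≠ 0 → j = i ∨ E j i) : N.det = ∏ i, N i i := by
  rw [Matrix.det_apply]
  rw [Finset.sum_eq_single (1 : Equiv.Perm (Fin d))]
  · simp
  · intro σ _ hσ
    rcases eq_or_ne (∏ i, N (σ i) i) 0 with h0 | h0
    · rw [h0, smul_zero]
    exfalso
    have hterm : ∀ i : Fin d, N (σ i) i ≠ 0 := fun i =>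
      Finset.prod_ne_zero_iff.1 h0 i (Finset.mem_univ i)
    have hle : ∀ i : Fin d, rk E i ≤ rk E (σ i) := by
      intro i
      rcases h (σ i) i (hterm i) with heq | hE
      · exact le_of_eq (congrArg (rk E) heq)
      · exact (rk_lt hG hE).le
    obtain ⟨i0, hi0⟩ : ∃ i0, σ i0 ≠ i0 := by
      by_contra hall
      push_neg at hall
      exact hσ (Equiv.ext hall)
    have hlt : rk E i0 < rk E (σ i0) := by
      rcases h (σ i0) i0 (hterm i0) with heq | hE
      · exact absurd heq.symm hi0
      · exact rk_lt hG hE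
    have hsum : ∑ i, rk E i < ∑ i, rk E (σ i) :=
      Finset.sum_lt_sum (fun i _ => hle i) ⟨i0, Finset.mem_univ i0, hlt⟩
    rw [Equiv.sum_comp σ (rk E)] at hsum
    exact lt_irrefl _ hsum
  · intro h1; exact absurd (Finset.mem_univ _) h1

end Aux

/-- Effect-respecting linear mixtures preserve the causal factorization
(Proposition 8.1): if `p(z) = ∏ φ_i(z_{\bar{pa}(i)})` is a Bayes-net density over `G`
and `M ∈ M⁰_dom(G)`, then the density `q(v) = p(M⁻¹ v)·|det M|⁻¹` of `v = M z` also
factorizes as `∏ ψ_i(v_{\bar{pa}(i)})` over the same graph `G`. -/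
theorem effect_respecting_preserves_factorization
    {d : ℕ} (E : Fin d → Fin d → Prop) (hG : IsDAG E)
    (M : Matrix (Fin d) (Fin d) ℝ) (hMunit : IsUnit M)
    (hMsupp : ∀ i j, M i j ≠ 0 → j ∈ barDom E i)
    (φ : Fin d → (Fin d → ℝ) → ℝ)
    (hφdep : ∀ i, DependsOnlyOn (barPa E i) (φ i))
    (hφpos : ∀ i z, 0 < φ i z)
    (hφmeas : ∀ i, Measurable (φ i))
    (hφnorm : ∀ i (z : Fin d → ℝ), ∫ t : ℝ, φ i (Function.update z i t) = 1)
    (p : (Fin d → ℝ) → ℝ) (hp : ∀ z, p z = ∏ i, φ i z) :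
    ∃ ψ : Fin d → (Fin d → ℝ) → ℝ,
      (∀ i, DependsOnlyOn (barPa E i) (ψ i)) ∧
      (∀ i v, 0 < ψ i v) ∧
      (∀ i, Measurable (ψ i)) ∧
      (∀ i (v : Fin d → ℝ), ∫ t : ℝ, ψ i (Function.update v i t) = 1) ∧
      (∀ v : Fin d → ℝ, p (M⁻¹.mulVec v) * |M.det|⁻¹ = ∏ i, ψ i v) := by
  set W := M⁻¹ with hW
  have hdet : M.det ≠ 0 :=
    isUnit_iff_ne_zero.1 ((Matrix.isUnit_iff_isUnit_det M).1 hMunit)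
  have hWsupp : ∀ i j, W i j ≠ 0 → j ∈ barDom E i :=
    SuppIn.inv hG hMsupp hMunit
  -- determinant of W
  have hWdet : W.det = (M.det)⁻¹ := by
    rw [hW, Matrix.det_nonsing_inv, Ring.inverse_eq_inv]
  have hWdet0 : W.det ≠ 0 := by rw [hWdet]; exact inv_ne_zero hdet
  have hWprod : W.det = ∏ i, W i i := by
    refine det_eq_prod_diag hG W (fun i j h => ?_)
    rcases hWsupp i j h with rfl | hd
    · exact Or.inl rfl
    · exact Or.inr hd.1
  have hWdiag : ∀ i, W i i ≠ 0 := by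
    intro i h0
    apply hWdet0
    rw [hWprod]
    exact Finset.prod_eq_zero (Finset.mem_univ i) h0
  -- agreement lemma
  have hagree : ∀ (i : Fin d) (v v' : Fin d → ℝ), (∀ j ∈ barPa E i, v j = v' j) →
      ∀ j ∈ barPa E i, W.mulVec v j = W.mulVec v' j := by
    intro i v v' hvv j hj
    simp only [Matrix.mulVec, dotProduct]
    refine Finset.sum_congr rfl fun k _ => ?_
    rcases eq_or_ne (W j k) 0 with h0 | h0
    · rw [h0, zero_mul, zero_mul]
    · rw [hvv k (barDom_sub_barPa_of_mem hG hj (hWsupp j k h0))]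
  set ψ : Fin d → (Fin d → ℝ) → ℝ := fun i v => |W i i| * φ i (W.mulVec v) with hψ
  have hψdep : ∀ i, DependsOnlyOn (barPa E i) (ψ i) := by
    intro i v v' hvv
    simp only [hψ]
    rw [hφdep i _ _ (hagree i v v' hvv)]
  have hψpos : ∀ i v, 0 < ψ i v := fun i v =>
    mul_pos (abs_pos.2 (hWdiag i)) (hφpos i _)
  have hmulVecMeas : Measurable (fun v : Fin d → ℝ => W.mulVec v) := by
    refine measurable_pi_lambda _ (fun j => ?_)
    simp only [Matrix.mulVec, dotProduct]
    exact Finset.measurable_sum _ (fun k _ => (measurable_pi_apply k).const_mul _)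
  have hψmeas : ∀ i, Measurable (ψ i) := fun i =>
    ((hφmeas i).comp hmulVecMeas).const_mul _
  -- key update computation
  have hupd : ∀ (i : Fin d) (v : Fin d → ℝ) (t : ℝ),
      ψ i (Function.update v i t)
        = |W i i| * φ i (Function.update (W.mulVec v) i
            (W i i * t + (W.mulVec v i - W i i * v i))) := by
    intro i v t
    simp only [hψ]
    congr 1
    refine hφdep i _ _ (fun j hj => ?_)
    have hval : W.mulVec (Function.update v i t) j
        = W.mulVec v j + W j i * (t - v i) := by
      simp only [Matrix.mulVec, dotProduct]
      have : ∀ k, W j k * (Function.update v i t) k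
          = W j k * v k + (if k = i then W j i * (t - v i) else 0) := by
        intro k
        rcases eq_or_ne k i with rfl | hk
        · rw [Function.update_self, if_pos rfl]; ring
        · simp [Function.update_of_ne hk, hk]
      simp_rw [this]
      rw [Finset.sum_add_distrib, Finset.sum_ite_eq' Finset.univ i
        (fun _ => W j i * (t - v i))]
      simp
    rcases eq_or_ne j i with rfl | hji
    · rw [hval, Function.update_self]; ring
    · have hWji : W j i = 0 := by
        by_contra h0
        rcases hWsupp j i h0 with heq | hd
        · exact hji heq.symm
        · rcases hj with rfl | hj
          · exact aux_no_self hG j hd.1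
          · exact aux_no_two hG hd.1 hj
      rw [hval, hWji, Function.update_of_ne hji]
      ring
  have hψnorm : ∀ i (v : Fin d → ℝ), ∫ t : ℝ, ψ i (Function.update v i t) = 1 := by
    intro i v
    set w := W.mulVec v with hw
    set c := W i i with hc
    have hcne : c ≠ 0 := hWdiag i
    calc ∫ t : ℝ, ψ i (Function.update v i t)
        = ∫ t : ℝ, |c| * φ i (Function.update w i (c * t + (w i - c * v i))) := by
          refine integral_congr_ae (Filter.Eventually.of_forall fun t => ?_)
          exact hupd i v t
      _ = |c| * ∫ t : ℝ, φ i (Function.update w i (c * t + (w i - c * v i))) :=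
          integral_const_mul _ _
      _ = |c| * (|c⁻¹| • ∫ s : ℝ, φ i (Function.update w i (s + (w i - c * v i)))) := by
          rw [Measure.integral_comp_mul_left
            (fun s => φ i (Function.update w i (s + (w i - c * v i)))) c]
      _ = |c| * (|c⁻¹| • ∫ s : ℝ, φ i (Function.update w i s)) := by
          rw [MeasureTheory.integral_add_right_eq_self
            (fun s => φ i (Function.update w i s)) (w i - c * v i)]
      _ = 1 := by
          rw [hφnorm i w, smul_eq_mul, mul_one, abs_inv,
            mul_inv_cancel₀ (abs_ne_zero.2 hcne)]
  refine ⟨ψ, hψdep, hψpos, hψmeas, hψnorm, fun v => ?_⟩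
  rw [hp]
  have : ∏ i, ψ i v = (∏ i, |W i i|) * ∏ i, φ i (W.mulVec v) := by
    rw [← Finset.prod_mul_distrib]
  rw [this, ← Finset.abs_prod, ← hWprod, hWdet, abs_inv]
  ring
end

section
/- Closure of effect-respecting matrices under inversion (Lemma D.4 / sp-respecting-inverse). Let G be a DAG on [d] and let M ∈ ℝ^{d×d} be an invertible matrix satisfying M_{ij} ≠ 0 ⟹ j ∈ \bar{dom}_G(i) for all i, j (i.e. M ∈ M^0_dom(G)). Then the inverse matrix N = M^{−1} also satisfies N_{ij} ≠ 0 ⟹ j ∈ \bar{dom}_G(i) for all i, j (i.e. M^{−1} ∈ M^0_dom(G)). -/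
open Matrix MeasureTheory

/-- Closure of effect-respecting matrices under inversion (Lemma D.4):
if `M` is invertible and `M i j ≠ 0 → j ∈ \bar{dom}_G(i)`, then so is `M⁻¹`. -/
theorem effect_respecting_inverse {d : ℕ} (E : Fin d → Fin d → Prop) (hG : IsDAG E)
    (M : Matrix (Fin d) (Fin d) ℝ) (hM : IsUnit M)
    (hsupp : ∀ i j, M i j ≠ 0 → j ∈ barDom E i) :
    IsUnit M⁻¹ ∧ ∀ i j, M⁻¹ i j ≠ 0 → j ∈ barDom E i := by
  -- the relation `j ∈ barDom E i` is reflexive and transitive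
  have htrans : ∀ {i j k : Fin d}, j ∈ barDom E i → k ∈ barDom E j → k ∈ barDom E i := by
    rintro i j k (rfl | ⟨hji, hci⟩) hk
    · exact hk
    · rcases hk with rfl | ⟨hkj, hcj⟩
      · exact Or.inr ⟨hji, hci⟩
      · exact Or.inr ⟨hcj hji, fun x hx => hcj (hci hx)⟩
  -- the submodule of matrices supported on this relation
  set p : Submodule ℝ (Matrix (Fin d) (Fin d) ℝ) :=
    { carrier := {A | ∀ i j, A i j ≠ 0 → j ∈ barDom E i}
      add_mem' := by
        intro A B hA hB i j h
        by_contra hc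
        have h1 : A i j = 0 := by by_contra h1; exact hc (hA i j h1)
        have h2 : B i j = 0 := by by_contra h2; exact hc (hB i j h2)
        exact h (by simp [Matrix.add_apply, h1, h2])
      zero_mem' := by intro i j h; simp at h
      smul_mem' := by
        intro c A hA i j h
        apply hA i j
        intro h0
        exact h (by simp [Matrix.smul_apply, h0]) } with hp
  have hMmem : M ∈ p := hsupp
  -- left multiplication by M maps p to p
  have hmul : ∀ A ∈ p, M * A ∈ p := by
    intro A hA i j h
    have : ∃ k, M i k * A k j ≠ 0 := by
      by_contra hc
      push_neg at hc
      exact h (by simp [Matrix.mul_apply, hc])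
    obtain ⟨k, hk⟩ := this
    exact htrans (hsupp i k (left_ne_zero_of_mul hk)) (hA k j (right_ne_zero_of_mul hk))
  obtain ⟨_⟩ := hM.nonempty_invertible
  -- the linear endomorphism of p given by left multiplication by M
  let f : p →ₗ[ℝ] p :=
    { toFun := fun A => ⟨M * A, hmul A A.2⟩
      map_add' := by intro A B; ext : 1; simp [Matrix.mul_add]
      map_smul' := by intro c A; ext : 1; simp [Matrix.mul_smul] }
  have hinj : Function.Injective f := by
    intro A B hAB
    have : (M * (A : Matrix (Fin d) (Fin d) ℝ)) = M * (B : Matrix (Fin d) (Fin d) ℝ) :=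
      congrArg Subtype.val hAB
    have := congrArg (fun X => ⅟M * X) this
    simp only [← Matrix.mul_assoc, invOf_mul_self, Matrix.one_mul] at this
    exact Subtype.ext this
  have hsurj : Function.Surjective f := (LinearMap.injective_iff_surjective).mp hinj
  have hone : (1 : Matrix (Fin d) (Fin d) ℝ) ∈ p := by
    intro i j h
    have : i = j := by
      by_contra hc
      exact h (Matrix.one_apply_ne hc)
    exact this ▸ Or.inl rfl
  obtain ⟨A, hA⟩ := hsurj ⟨1, hone⟩
  have hMA : M * (A : Matrix (Fin d) (Fin d) ℝ) = 1 := congrArg Subtype.val hA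
  have hinv : M⁻¹ = (A : Matrix (Fin d) (Fin d) ℝ) := Matrix.inv_eq_right_inv hMA
  refine ⟨Matrix.isUnit_nonsing_inv_iff.mpr hM, ?_⟩
  rw [hinv]
  exact A.2
end
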